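/- arXiv:1804.03894 — 8 statements merged into one kernel-verified Lean document; each statement's English description precedes it below -/
import Mathlib

section
/- Fix a nonempty subset S ⊆ P and a real number c, and consider the coalitional game v on P defined by v(Q) = c if Q ∩ S ≠ ∅ and v(Q) = 0 otherwise. Then φ(p,v) = c/|S| for every p ∈ S, and φ(p,v) = 0 for every p ∈ P\S. -/
open Finset

private lemma card_T_mul {β : Type*} [Fintype β] [DecidableEq β] {n : ℕ}
    (S' : Finset β) (a : β) (ha : a ∈ S') :
    S'.card * (univ.filter fun (π : β ≃ Fin n) =>
        ∀ q ∈ S', q ≠ a → π a < π q).card = Fintype.card (β ≃ Fin n) := by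
  classical
  set T : β → Finset (β ≃ Fin n) := fun b =>
    univ.filter fun π => ∀ q ∈ S', q ≠ b → π b < π q with hT
  have hmem : ∀ (b : β) (π : β ≃ Fin n), π ∈ T b ↔ ∀ q ∈ S', q ≠ b → π b < π q := by
    intro b π; simp [hT]
  have key : ∀ x y : β, x ∈ S' → y ∈ S' → ∀ π : β ≃ Fin n,
      π ∈ T x → (Equiv.swap x y).trans π ∈ T y := by
    intro x y hx hy π hπ
    rw [hmem] at hπ ⊢
    intro q hq hqy
    simp only [Equiv.trans_apply, Equiv.swap_apply_right]
    by_cases hqx : q = x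
    · subst hqx
      rw [Equiv.swap_apply_left]
      exact hπ y hy (fun h => hqy (h ▸ rfl))
    · rw [Equiv.swap_apply_of_ne_of_ne hqx hqy]
      exact hπ q hq hqx
  have hcard : ∀ b ∈ S', (T b).card = (T a).card := by
    intro b hb
    apply Finset.card_equiv (Equiv.equivCongr (Equiv.swap b a) (Equiv.refl (Fin n)))
    intro π
    have he : (Equiv.equivCongr (Equiv.swap b a) (Equiv.refl (Fin n))) π =
        (Equiv.swap b a).trans π := by
      ext x; simp [Equiv.equivCongr]
    rw [he]
    constructor
    · intro hπ
      exact key b a hb ha π hπ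
    · intro hπ
      have h2 := key a b ha hb _ hπ
      have hid : (Equiv.swap a b).trans ((Equiv.swap b a).trans π) = π := by
        ext x; simp [Equiv.swap_comm a b]
      exact hid ▸ h2
  have hSne : S'.Nonempty := ⟨a, ha⟩
  set f : (β ≃ Fin n) → β := fun π => π.symm ((S'.image π).min' (hSne.image π)) with hf
  have hf1 : ∀ π, f π ∈ S' := by
    intro π
    have h := Finset.min'_mem (S'.image π) (hSne.image π)
    obtain ⟨q, hq, hq2⟩ := Finset.mem_image.mp h
    show π.symm ((S'.image ⇑π).min' (hSne.image ⇑π)) ∈ S'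
    rw [← hq2, Equiv.symm_apply_apply]; exact hq
  have hf2 : ∀ (π : β ≃ Fin n), ∀ q ∈ S', π (f π) ≤ π q := by
    intro π q hq
    show π (π.symm ((S'.image ⇑π).min' (hSne.image ⇑π))) ≤ π q
    rw [Equiv.apply_symm_apply]
    exact Finset.min'_le _ _ (Finset.mem_image_of_mem π hq)
  have hfiber : ∀ b ∈ S', univ.filter (fun π => f π = b) = T b := by
    intro b hb
    ext π
    simp only [mem_filter, mem_univ, true_and, hmem]
    constructor
    · rintro rfl q hq hqb
      refine lt_of_le_of_ne (hf2 π q hq) (fun h => hqb ?_)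
      exact π.injective h.symm
    · intro h
      by_contra hne
      exact absurd (hf2 π b hb) (not_le.mpr (h (f π) (hf1 π) hne))
  have htotal : ∑ b ∈ S', (T b).card = Fintype.card (β ≃ Fin n) := by
    rw [← Finset.card_univ, Finset.card_eq_sum_card_fiberwise (f := f) (fun π _ => hf1 π)]
    exact Finset.sum_congr rfl fun b hb => by rw [hfiber b hb]
  calc S'.card * (T a).card = ∑ _b ∈ S', (T a).card := by rw [Finset.sum_const, smul_eq_mul]
    _ = ∑ b ∈ S', (T b).card := Finset.sum_congr rfl fun b hb => (hcard b hb).symm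
    _ = _ := htotal

/-- The Shapley value of player `p` in the coalitional game with player set `P`
and characteristic function `v`. -/
noncomputable def shapley {α : Type*} [DecidableEq α] (P : Finset α) (v : Finset α → ℝ)
    (p : α) : ℝ :=
  if hp : p ∈ P then
    (∑ π : {x // x ∈ P} ≃ Fin P.card,
      (v ((P.attach.filter fun q => π q ≤ π ⟨p, hp⟩).image Subtype.val) -
        v (((P.attach.filter fun q => π q ≤ π ⟨p, hp⟩).image Subtype.val).erase p))) /
      (P.card).factorial
  else 0
/-- For the game in which a coalition is worth `c` exactly when it meets a fixed
nonempty set `S ⊆ P`, the players of `S` split `c` equally and the other players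
get nothing. -/
theorem shapley_hitting_game {α : Type*} [DecidableEq α] (P S : Finset α)
    (hS : S ⊆ P) (hSne : S.Nonempty) (c : ℝ) :
    (∀ p ∈ S,
        shapley P (fun Q => if (Q ∩ S).Nonempty then c else 0) p = c / S.card) ∧
    (∀ p ∈ P, p ∉ S →
        shapley P (fun Q => if (Q ∩ S).Nonempty then c else 0) p = 0) := by
  classical
  constructor
  · intro p hpS
    have hp : p ∈ P := hS hpS
    rw [shapley, dif_pos hp]
    set pe : {x // x ∈ P} := ⟨p, hp⟩ with hpe
    set S' : Finset {x // x ∈ P} := P.attach.filter (fun q => q.1 ∈ S) with hS'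
    have hpeS' : pe ∈ S' := by simp [hS', hpe, hpS]
    have hsummand : ∀ π : {x // x ∈ P} ≃ Fin P.card,
        ((if ((((P.attach.filter fun q => π q ≤ π pe).image Subtype.val)) ∩ S).Nonempty then c else 0) -
         (if (((((P.attach.filter fun q => π q ≤ π pe).image Subtype.val)).erase p ∩ S)).Nonempty then c else 0))
        = if (∀ q ∈ S', q ≠ pe → π pe < π q) then c else 0 := by
      intro π
      set B : Finset α := (P.attach.filter fun q => π q ≤ π pe).image Subtype.val with hB
      have hpB : p ∈ B := by
        rw [hB]
        exact Finset.mem_image.mpr ⟨pe, Finset.mem_filter.mpr ⟨Finset.mem_attach _ _, le_refl _⟩, rfl⟩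
      rw [if_pos ⟨p, Finset.mem_inter.mpr ⟨hpB, hpS⟩⟩]
      have hch : (B.erase p ∩ S).Nonempty ↔ ¬ (∀ q ∈ S', q ≠ pe → π pe < π q) := by
        constructor
        · rintro ⟨x, hx⟩
          rw [Finset.mem_inter, Finset.mem_erase] at hx
          obtain ⟨⟨hxp, hxB⟩, hxS⟩ := hx
          obtain ⟨q, hq, hq2⟩ := Finset.mem_image.mp hxB
          rw [Finset.mem_filter] at hq
          intro h
          have hqS' : q ∈ S' := by
            rw [hS', Finset.mem_filter]; exact ⟨Finset.mem_attach _ _, hq2 ▸ hxS⟩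
          have hqpe : q ≠ pe := fun he => hxp (by rw [← hq2, he])
          exact absurd hq.2 (not_le.mpr (h q hqS' hqpe))
        · intro h
          push_neg at h
          obtain ⟨q, hqS', hqpe, hle⟩ := h
          refine ⟨q.1, Finset.mem_inter.mpr ⟨Finset.mem_erase.mpr ⟨?_, ?_⟩, ?_⟩⟩
          · exact fun he => hqpe (Subtype.ext he)
          · exact Finset.mem_image.mpr ⟨q, Finset.mem_filter.mpr ⟨Finset.mem_attach _ _, hle⟩, rfl⟩
          · exact (Finset.mem_filter.mp hqS').2
      by_cases hcond : ∀ q ∈ S', q ≠ pe → π pe < π q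
      · rw [if_pos hcond, if_neg (fun hne => (hch.mp hne) hcond), sub_zero]
      · rw [if_neg hcond, if_pos (hch.mpr hcond), sub_self]
    rw [Finset.sum_congr rfl (fun π _ => hsummand π)]
    rw [Finset.sum_ite, Finset.sum_const, Finset.sum_const_zero, add_zero, nsmul_eq_mul]
    have hkey := card_T_mul (n := P.card) S' pe hpeS'
    have hScard : S'.card = S.card := by
      apply Finset.card_nbij (fun q => q.1)
      · intro q hq; exact (Finset.mem_filter.mp hq).2
      · intro q _ r _ h; exact Subtype.ext h
      · intro x hx
        exact ⟨⟨x, hS hx⟩, Finset.mem_coe.mpr (Finset.mem_filter.mpr ⟨Finset.mem_attach _ _, hx⟩), rfl⟩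
    have hE : Fintype.card ({x // x ∈ P} ≃ Fin P.card) = (P.card).factorial := by
      rw [Fintype.card_equiv (Fintype.equivFinOfCardEq (Fintype.card_coe P)), Fintype.card_coe]
    rw [hE, hScard] at hkey
    set t := (univ.filter fun (π : {x // x ∈ P} ≃ Fin P.card) =>
        ∀ q ∈ S', q ≠ pe → π pe < π q).card with ht
    have ht0 : t ≠ 0 := by
      intro h
      rw [h, mul_zero] at hkey
      exact Nat.factorial_ne_zero _ hkey.symm
    have : ((P.card).factorial : ℝ) = (S.card : ℝ) * t := by exact_mod_cast hkey.symm
    rw [this, mul_comm (t : ℝ) c, mul_div_mul_right c _ (by exact_mod_cast ht0)]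
  · intro p hp hpS
    rw [shapley, dif_pos hp]
    have key : ∀ A : Finset α, (A.erase p ∩ S) = A ∩ S := by
      intro A; ext x
      simp only [Finset.mem_inter, Finset.mem_erase]
      constructor
      · rintro ⟨⟨_, h⟩, h2⟩; exact ⟨h, h2⟩
      · rintro ⟨h1, h2⟩; exact ⟨⟨fun h => hpS (h ▸ h2), h1⟩, h2⟩
    simp [key]
end

section
/- Airport game (Littlechild–Owen): let 0 < x₁ < x₂ < … < xₙ be real numbers, P = {x₁,…,xₙ}, and let the characteristic function be v_air(Q) = max(Q) for nonempty Q ⊆ P (and v_air(∅)=0). Then for each i ∈ {1,…,n}, the Shapley value is φ(xᵢ, v_air) = Σ_{j=1}^{i} (xⱼ − x_{j−1})/(n − j + 1), where x₀ = 0. Equivalently, φ(x₁,v_air) = x₁/n and φ(xᵢ,v_air) = φ(x_{i−1},v_air) + (xᵢ − x_{i−1})/(n−i+1) for i ≥ 2. -/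
open Finset

private lemma telescope (f : ℕ → ℝ) {m i : ℕ} (h : m ≤ i) :
    ∑ j ∈ Icc (m + 1) i, (f j - f (j - 1)) = f i - f m := by
  induction i, h using Nat.le_induction with
  | base => simp
  | succ k hk ih =>
    rw [Finset.sum_Icc_succ_top (by omega), ih]
    simp

private lemma count_sum {α : Type*} [DecidableEq α] [Fintype α] {N : ℕ}
    (hN : Fintype.card α = N) (B : Finset α) (a : α) (ha : a ∈ B) :
    ∑ π : α ≃ Fin N, (if ∀ c ∈ B, c ≠ a → π a < π c then (1:ℝ) else 0)
      = (Nat.factorial N) / B.card := by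
  have hcardE : Fintype.card (α ≃ Fin N) = (Nat.factorial N) := by
    rw [Fintype.card_equiv ((Fintype.equivFin α).trans (finCongr hN)), hN]
  have key : ∀ b ∈ B,
      (∑ π : α ≃ Fin N, if ∀ c ∈ B, c ≠ b → π b < π c then (1:ℝ) else 0)
        = ∑ π : α ≃ Fin N, if ∀ c ∈ B, c ≠ a → π a < π c then (1:ℝ) else 0 := by
    intro b hb
    refine Fintype.sum_equiv
      ⟨fun π => (Equiv.swap a b).trans π, fun π => (Equiv.swap a b).trans π,
        fun π => by ext c; simp, fun π => by ext c; simp⟩ _ _ ?_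
    intro π
    simp only [Equiv.coe_fn_mk, Equiv.trans_apply, Equiv.swap_apply_left]
    refine if_congr ⟨?_, ?_⟩ rfl rfl
    · intro h c hc hca
      rcases eq_or_ne c b with rfl | hcb
      · rw [Equiv.swap_apply_right]
        exact h a ha (fun hab => hca hab.symm)
      · rw [Equiv.swap_apply_of_ne_of_ne hca hcb]
        exact h c hc hcb
    · intro h c hc hcb
      rcases eq_or_ne c a with rfl | hca
      · have := h b hb (fun hba => hcb hba.symm)
        rwa [Equiv.swap_apply_right] at this
      · have := h c hc hca
        rwa [Equiv.swap_apply_of_ne_of_ne hca hcb] at this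
  have huniq : ∀ π : α ≃ Fin N,
      (∑ b ∈ B, if ∀ c ∈ B, c ≠ b → π b < π c then (1:ℝ) else 0) = 1 := by
    intro π
    obtain ⟨b₀, hb₀, hmin⟩ := B.exists_min_image (fun c => π c) ⟨a, ha⟩
    rw [Finset.sum_eq_single b₀]
    · rw [if_pos]
      intro c hc hcb
      exact lt_of_le_of_ne (hmin c hc) (fun h => hcb (π.injective h).symm)
    · intro b hb hne
      rw [if_neg]
      push_neg
      exact ⟨b₀, hb₀, fun h => hne h.symm, hmin b hb⟩
    · intro h; exact absurd hb₀ h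
  have h2 : (B.card : ℝ) *
      (∑ π : α ≃ Fin N, if ∀ c ∈ B, c ≠ a → π a < π c then (1:ℝ) else 0) = (Nat.factorial N) := by
    calc (B.card : ℝ) * _
        = ∑ b ∈ B, ∑ π : α ≃ Fin N, (if ∀ c ∈ B, c ≠ b → π b < π c then (1:ℝ) else 0) := by
          rw [Finset.sum_congr rfl key, Finset.sum_const, nsmul_eq_mul]
      _ = ∑ π : α ≃ Fin N, ∑ b ∈ B, (if ∀ c ∈ B, c ≠ b → π b < π c then (1:ℝ) else 0) :=
          Finset.sum_comm
      _ = ∑ _π : α ≃ Fin N, (1:ℝ) := Finset.sum_congr rfl (fun π _ => huniq π)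
      _ = (Nat.factorial N) := by rw [Finset.sum_const, Finset.card_univ, hcardE, nsmul_eq_mul, mul_one]
  have hB0 : (B.card : ℝ) ≠ 0 := by
    simp only [ne_eq, Nat.cast_eq_zero, Finset.card_eq_zero]
    exact fun h => by simp [h] at ha
  field_simp at h2 ⊢
  linarith [h2]


/-- The Airport game of Littlechild and Owen: players are reals
`0 = X 0 < X 1 < ⋯ < X n` (the player set is `{X 1, …, X n}`), the worth of a
nonempty coalition is its maximum, and the Shapley value of `X i` is
`∑_{j=1}^{i} (X j − X (j−1)) / (n − j + 1)`. -/
theorem shapley_airport (n : ℕ) (X : ℕ → ℝ) (hX0 : X 0 = 0)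
    (hmono : ∀ i j : ℕ, i < j → j ≤ n → X i < X j)
    (i : ℕ) (hi : i ∈ Finset.Icc 1 n) :
    shapley ((Finset.Icc 1 n).image X)
      (fun Q => if h : Q.Nonempty then Q.max' h else 0) (X i) =
      ∑ j ∈ Finset.Icc 1 i, (X j - X (j - 1)) / ((n : ℝ) - (j : ℝ) + 1) := by
  classical
  simp only [Finset.mem_Icc] at hi
  obtain ⟨hi1, hin⟩ := hi
  set P : Finset ℝ := (Finset.Icc 1 n).image X with hP
  have hle : ∀ {k l : ℕ}, l ≤ n → k ≤ l → X k ≤ X l := by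
    intro k l hl hkl
    rcases eq_or_lt_of_le hkl with rfl | h
    · exact le_refl _
    · exact (hmono k l h hl).le
  have hinj : ∀ {k l : ℕ}, k ≤ n → l ≤ n → X k = X l → k = l := by
    intro k l hk hl h
    by_contra hne
    rcases Nat.lt_or_ge k l with hlt' | hge
    · exact absurd h (hmono k l hlt' hl).ne
    · exact absurd h.symm (hmono l k (by omega) hk).ne
  have hmemP : ∀ {k : ℕ}, 1 ≤ k → k ≤ n → X k ∈ P := fun h1 h2 =>
    Finset.mem_image_of_mem X (Finset.mem_Icc.mpr ⟨h1, h2⟩)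
  have hp : X i ∈ P := hmemP hi1 hin
  have hcardP : P.card = n := by
    rw [hP, Finset.card_image_of_injOn, Nat.card_Icc]
    · omega
    · intro k hk l hl h
      simp only [Finset.coe_Icc, Set.mem_Icc] at hk hl
      exact hinj hk.2 hl.2 h
  have hcard' : Fintype.card {x // x ∈ P} = P.card := Fintype.card_coe P
  set a : {x // x ∈ P} := ⟨X i, hp⟩ with ha
  set Bj : ℕ → Finset {x // x ∈ P} := fun j => P.attach.filter fun q => X j ≤ (q : ℝ)
    with hBj
  have haBj : ∀ j ∈ Icc 1 i, a ∈ Bj j := by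
    intro j hj
    simp only [Finset.mem_Icc] at hj
    simp only [hBj, Finset.mem_filter, Finset.mem_attach, true_and, ha]
    exact hle hin hj.2
  have hBcard : ∀ j ∈ Icc 1 i, (Bj j).card = n + 1 - j := by
    intro j hj
    simp only [Finset.mem_Icc] at hj
    have : (Icc j n).card = (Bj j).card := by
      apply Finset.card_bij (fun k hk => (⟨X k, by
        simp only [Finset.mem_Icc] at hk
        exact hmemP (by omega) hk.2⟩ : {x // x ∈ P}))
      · intro k hk
        simp only [Finset.mem_Icc] at hk
        simp only [hBj, Finset.mem_filter, Finset.mem_attach, true_and]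
        exact hle hk.2 hk.1
      · intro k hk l hl h
        simp only [Finset.mem_Icc] at hk hl
        exact hinj hk.2 hl.2 (congrArg Subtype.val h)
      · intro q hq
        simp only [hBj, Finset.mem_filter, Finset.mem_attach, true_and] at hq
        have hqP : (q : ℝ) ∈ (Finset.Icc 1 n).image X := hP ▸ q.property
        obtain ⟨k, hk, hkq⟩ := Finset.mem_image.mp hqP
        simp only [Finset.mem_Icc] at hk
        refine ⟨k, Finset.mem_Icc.mpr ⟨?_, hk.2⟩, Subtype.ext hkq⟩
        by_contra hjk
        have : X k < X j := hmono k j (by omega) (by omega)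
        rw [hkq] at this
        exact absurd hq (not_le.mpr this)
    rw [← this, Nat.card_Icc]
  rw [shapley, dif_pos hp]
  have main : ∀ π : {x // x ∈ P} ≃ Fin P.card,
      (fun Q => if h : Q.Nonempty then Q.max' h else 0)
          ((P.attach.filter fun q => π q ≤ π ⟨X i, hp⟩).image Subtype.val) -
        (fun Q => if h : Q.Nonempty then Q.max' h else 0)
          (((P.attach.filter fun q => π q ≤ π ⟨X i, hp⟩).image Subtype.val).erase (X i)) =
      ∑ j ∈ Icc 1 i, (X j - X (j-1)) *
        (if ∀ c ∈ Bj j, c ≠ a → π a < π c then (1:ℝ) else 0) := by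
    intro π
    set S : Finset ℝ := (P.attach.filter fun q => π q ≤ π a).image Subtype.val with hSdef
    have hSsub : S ⊆ P := by
      intro s hs
      simp only [hSdef, Finset.mem_image, Finset.mem_filter, Finset.mem_attach,
        true_and] at hs
      obtain ⟨q, _, rfl⟩ := hs
      exact q.property
    have hSmem : ∀ (q : {x // x ∈ P}), (q : ℝ) ∈ S ↔ π q ≤ π a := by
      intro q
      simp only [hSdef, Finset.mem_image, Finset.mem_filter, Finset.mem_attach, true_and]
      constructor
      · rintro ⟨r, hr, hrq⟩
        rwa [Subtype.ext hrq] at hr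
      · intro h; exact ⟨q, h, rfl⟩
    have hpS : X i ∈ S := (hSmem a).mpr (le_refl _)
    set A : Finset ℕ := (Icc 1 n).filter (fun k => X k ∈ S) with hA
    have hAmem : ∀ {k}, k ∈ A ↔ (1 ≤ k ∧ k ≤ n) ∧ X k ∈ S := by
      intro k; simp [hA, Finset.mem_filter, Finset.mem_Icc]
    have hiA : i ∈ A := hAmem.mpr ⟨⟨hi1, hin⟩, hpS⟩
    have hSA : S = A.image X := by
      ext s
      constructor
      · intro hs
        have hsP : s ∈ (Finset.Icc 1 n).image X := hP ▸ hSsub hs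
        obtain ⟨k, hk, rfl⟩ := Finset.mem_image.mp hsP
        simp only [Finset.mem_Icc] at hk
        exact Finset.mem_image_of_mem X (hAmem.mpr ⟨hk, hs⟩)
      · intro hs
        obtain ⟨k, hk, rfl⟩ := Finset.mem_image.mp hs
        exact (hAmem.mp hk).2
    set E : Finset ℕ := A.erase i with hE
    have hEsub : ∀ {k}, k ∈ E → (1 ≤ k ∧ k ≤ n) ∧ k ≠ i ∧ X k ∈ S := by
      intro k hk
      obtain ⟨hki, hkA⟩ := Finset.mem_erase.mp hk
      exact ⟨(hAmem.mp hkA).1, hki, (hAmem.mp hkA).2⟩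
    have hSerase : S.erase (X i) = E.image X := by
      ext s
      simp only [Finset.mem_erase]
      constructor
      · rintro ⟨hs, hsS⟩
        rw [hSA] at hsS
        obtain ⟨k, hk, rfl⟩ := Finset.mem_image.mp hsS
        refine Finset.mem_image_of_mem X (Finset.mem_erase.mpr ⟨?_, hk⟩)
        intro h; subst h; exact hs rfl
      · intro hs
        obtain ⟨k, hk, rfl⟩ := Finset.mem_image.mp hs
        obtain ⟨h1, h2, h3⟩ := hEsub hk
        refine ⟨fun h => h2 (hinj h1.2 hin h), h3⟩
    by_cases hcase : ∀ k ∈ A, k ≤ i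
    · -- X i is the max of S
      set m : ℕ := E.sup id with hm
      have hmi : m < i := by
        have : E.sup id ≤ i - 1 := by
          apply Finset.sup_le
          intro k hk
          obtain ⟨_, h2, _⟩ := hEsub hk
          have := hcase k (Finset.mem_of_mem_erase hk)
          simp only [id_eq]
          omega
        omega
      have hmn : m ≤ n := by
        apply Finset.sup_le
        intro k hk
        simp only [id_eq]
        exact (hEsub hk).1.2
      -- LHS = X i - X m
      have hmaxS : S.max' ⟨X i, hpS⟩ = X i := by
        apply le_antisymm
        · apply Finset.max'_le
          intro s hs
          rw [hSA] at hs
          obtain ⟨k, hk, rfl⟩ := Finset.mem_image.mp hs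
          exact hle hin (hcase k hk)
        · exact Finset.le_max' _ _ hpS
      have hlhs : (if h : S.Nonempty then S.max' h else 0) -
          (if h : (S.erase (X i)).Nonempty then (S.erase (X i)).max' h else 0)
          = X i - X m := by
        rw [dif_pos ⟨X i, hpS⟩] at *
        rw [hmaxS]
        rcases Finset.eq_empty_or_nonempty E with hEe | hEne
        · rw [hSerase, hEe]
          simp only [Finset.image_empty, Finset.not_nonempty_empty, dif_neg,
            not_false_iff]
          rw [hm, hEe]
          simp [hX0]
        · have hne' : (S.erase (X i)).Nonempty := by
            rw [hSerase]; exact hEne.image X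
          rw [dif_pos hne']
          have hmE : m ∈ E := by
            rw [hm]
            have := Finset.max'_mem E hEne
            have heq : E.sup id = E.max' hEne := by
              rw [Finset.max'_eq_sup' , Finset.sup'_eq_sup]
            rw [heq]; exact this
          have : (S.erase (X i)).max' hne' = X m := by
            apply le_antisymm
            · apply Finset.max'_le
              intro s hs
              rw [hSerase] at hs
              obtain ⟨k, hk, rfl⟩ := Finset.mem_image.mp hs
              exact hle hmn (Finset.le_sup (f := id) hk)
            · apply Finset.le_max'
              rw [hSerase]
              exact Finset.mem_image_of_mem X hmE
          rw [this]
      rw [hlhs]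
      -- indicators
      have hind : ∀ j ∈ Icc 1 i,
          (if ∀ c ∈ Bj j, c ≠ a → π a < π c then (1:ℝ) else 0)
            = (if m + 1 ≤ j then (1:ℝ) else 0) := by
        intro j hj
        simp only [Finset.mem_Icc] at hj
        congr 1
        rw [eq_iff_iff]
        constructor
        · intro h
          by_contra hjm
          push_neg at hjm
          have hEne : E.Nonempty := by
            by_contra hEe
            rw [Finset.not_nonempty_iff_eq_empty] at hEe
            rw [hm, hEe] at hjm
            simp only [Finset.sup_empty, bot_eq_zero] at hjm
            omega
          have hmE : m ∈ E := by
            rw [hm, ← Finset.sup'_eq_sup hEne, ← Finset.max'_eq_sup']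
            exact E.max'_mem hEne
          obtain ⟨⟨hm1, hmn'⟩, hmne, hmS⟩ := hEsub hmE
          have hcm : (⟨X m, hmemP hm1 hmn'⟩ : {x // x ∈ P}) ∈ Bj j := by
            simp only [hBj, Finset.mem_filter, Finset.mem_attach, true_and]
            exact hle hmn' (by omega)
          have hca : (⟨X m, hmemP hm1 hmn'⟩ : {x // x ∈ P}) ≠ a := by
            intro hh
            exact hmne (hinj hmn' hin (congrArg Subtype.val hh))
          have := h _ hcm hca
          have hle' := (hSmem ⟨X m, hmemP hm1 hmn'⟩).mp hmS
          exact absurd hle' (not_le.mpr this)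
        · intro hjm c hc hca
          simp only [hBj, Finset.mem_filter, Finset.mem_attach, true_and] at hc
          have hcP : (c : ℝ) ∈ (Finset.Icc 1 n).image X := hP ▸ c.property
          obtain ⟨k, hk, hkc⟩ := Finset.mem_image.mp hcP
          simp only [Finset.mem_Icc] at hk
          have hki : k ≠ i := by
            intro h; subst h
            exact hca (Subtype.ext hkc.symm)
          have hkS : X k ∉ S := by
            intro hkS
            have hkE : k ∈ E := Finset.mem_erase.mpr ⟨hki, hAmem.mpr ⟨hk, hkS⟩⟩
            have : k ≤ m := Finset.le_sup (f := id) hkE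
            -- but X j ≤ X k = c and j ≥ m+1 so k ≥ j > m, contradiction
            have hjk : j ≤ k := by
              by_contra hjk
              have := hmono k j (by omega) (by omega)
              rw [hkc] at this
              exact absurd hc (not_le.mpr this)
            omega
          rw [hkc] at hkS
          have : ¬ (π c ≤ π a) := by
            intro hh
            exact hkS ((hSmem c).mpr hh)
          rcases lt_or_ge (π a) (π c) with h | h
          · exact h
          · exact absurd h this
      rw [Finset.sum_congr rfl (fun j hj => by rw [hind j hj])]
      have hfilter : ∑ j ∈ Icc 1 i, (X j - X (j-1)) * (if m + 1 ≤ j then (1:ℝ) else 0)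
          = ∑ j ∈ Icc (m+1) i, (X j - X (j-1)) := by
        have hsplit : ∀ j, (X j - X (j-1)) * (if m + 1 ≤ j then (1:ℝ) else 0)
            = if m + 1 ≤ j then (X j - X (j-1)) else 0 := by
          intro j; split <;> simp
        simp_rw [hsplit]
        rw [← Finset.sum_filter]
        congr 1
        ext j
        simp only [Finset.mem_filter, Finset.mem_Icc]
        omega
      rw [hfilter, telescope X (le_of_lt hmi)]
    · -- some k > i in A: marginal is 0 and all indicators are 0
      push_neg at hcase
      obtain ⟨K, hKA, hKi⟩ := hcase
      obtain ⟨⟨hK1, hKn⟩, hKS⟩ := hAmem.mp hKA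
      have hKE : X K ∈ S.erase (X i) := by
        refine Finset.mem_erase.mpr ⟨?_, hKS⟩
        intro h
        exact absurd (hinj hKn hin h) (by omega)
      have hne' : (S.erase (X i)).Nonempty := ⟨X K, hKE⟩
      have hlhs : (if h : S.Nonempty then S.max' h else 0) -
          (if h : (S.erase (X i)).Nonempty then (S.erase (X i)).max' h else 0) = 0 := by
        rw [dif_pos ⟨X i, hpS⟩, dif_pos hne']
        have heq : S.max' ⟨X i, hpS⟩ = (S.erase (X i)).max' hne' := by
          apply le_antisymm
          · apply Finset.max'_le
            intro s hs
            rcases eq_or_ne s (X i) with rfl | hsne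
            · exact le_trans (hle hKn (by omega)) (Finset.le_max' _ _ hKE)
            · exact Finset.le_max' _ _ (Finset.mem_erase.mpr ⟨hsne, hs⟩)
          · exact Finset.max'_le _ _ _ (fun s hs =>
              Finset.le_max' _ _ (Finset.mem_of_mem_erase hs))
        rw [heq, sub_self]
      rw [hlhs]
      symm
      apply Finset.sum_eq_zero
      intro j hj
      simp only [Finset.mem_Icc] at hj
      rw [if_neg, mul_zero]
      push_neg
      refine ⟨⟨X K, hmemP hK1 hKn⟩, ?_, ?_, ?_⟩
      · simp only [hBj, Finset.mem_filter, Finset.mem_attach, true_and]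
        exact hle hKn (by omega)
      · intro h
        exact absurd (hinj hKn hin (congrArg Subtype.val h)) (by omega)
      · exact (hSmem _).mp hKS
  calc (∑ π : {x // x ∈ P} ≃ Fin P.card,
      ((fun Q => if h : Q.Nonempty then Q.max' h else 0)
          ((P.attach.filter fun q => π q ≤ π ⟨X i, hp⟩).image Subtype.val) -
        (fun Q => if h : Q.Nonempty then Q.max' h else 0)
          (((P.attach.filter fun q => π q ≤ π ⟨X i, hp⟩).image Subtype.val).erase (X i)))) /
      (Nat.factorial P.card)
      = (∑ π : {x // x ∈ P} ≃ Fin P.card, ∑ j ∈ Icc 1 i, (X j - X (j-1)) *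
          (if ∀ c ∈ Bj j, c ≠ a → π a < π c then (1:ℝ) else 0)) /
        (Nat.factorial P.card) := by
        rw [Finset.sum_congr rfl (fun π _ => main π)]
    _ = (∑ j ∈ Icc 1 i, (X j - X (j-1)) *
          (∑ π : {x // x ∈ P} ≃ Fin P.card,
            (if ∀ c ∈ Bj j, c ≠ a → π a < π c then (1:ℝ) else 0))) /
        (Nat.factorial P.card) := by
        rw [Finset.sum_comm]
        simp_rw [Finset.mul_sum]
    _ = ∑ j ∈ Icc 1 i, (X j - X (j - 1)) / ((n : ℝ) - (j : ℝ) + 1) := by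
        rw [Finset.sum_div]
        refine Finset.sum_congr rfl (fun j hj => ?_)
        rw [count_sum hcard' (Bj j) a (haBj j hj), hBcard j hj, hcardP]
        simp only [Finset.mem_Icc] at hj
        have hc1 : ((n + 1 - j : ℕ) : ℝ) = (n : ℝ) - (j : ℝ) + 1 := by
          push_cast [Nat.cast_sub (by omega : j ≤ n + 1)]
          ring
        have hd : ((n : ℝ) - (j : ℝ) + 1) ≠ 0 := by
          rw [← hc1]
          exact Nat.cast_ne_zero.mpr (by omega)
        have hF : ((Nat.factorial n : ℕ) : ℝ) ≠ 0 :=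
          Nat.cast_ne_zero.mpr (Nat.factorial_ne_zero n)
        rw [hc1]
        field_simp
end

section
/- LengthInterval game: let x₁ < x₂ < … < xₙ be real numbers, P = {x₁,…,xₙ}, and let the characteristic function be v_li(Q) = max(Q) − min(Q) for nonempty Q ⊆ P (and v_li(∅)=0). Then for each i ∈ {1,…,n}, φ(xᵢ, v_li) = Σ_{j=2}^{i} (xⱼ − x_{j−1})/(n − j + 1) + Σ_{j=i}^{n−1} (x_{j+1} − xⱼ)/j − (xₙ − x₁)/n. -/
/-!
The length `max Q - min Q` of a coalition is the sum of the gaps `X (j + 1) - X j` that it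
straddles, so the game is a nonnegative combination of the games "the coalition meets both
`{X 1, …, X j}` and `{X (j + 1), …, X n}`". Each of these is `h L + h R - h (L ∪ R)`, where `h T`
is worth `1` exactly on coalitions meeting `T`. By linearity it remains to see that the Shapley
value of `h T` is `1 / |T|` for members of `T` (a member contributes exactly when it comes first
among `T`, and by symmetry this happens in a `1 / |T|` fraction of the orders) and `0` otherwise.
-/

open Finset

section Shapley

variable {α : Type*} [DecidableEq α] {P : Finset α} {p : α}

-- The coalition `P(π, p)` of the informal statement.
def coalitionUpTo (π : {x // x ∈ P} ≃ Fin #P) (p : {x // x ∈ P}) : Finset α :=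
  (P.attach.filter fun q => π q ≤ π p).image Subtype.val

theorem mem_coalitionUpTo {π : {x // x ∈ P} ≃ Fin #P} {p : {x // x ∈ P}} {x : α} :
    x ∈ coalitionUpTo π p ↔ ∃ h : x ∈ P, π ⟨x, h⟩ ≤ π p := by
  simp [coalitionUpTo]

theorem coalitionUpTo_subset (π : {x // x ∈ P} ≃ Fin #P) (p : {x // x ∈ P}) :
    coalitionUpTo π p ⊆ P := fun _ hx => (mem_coalitionUpTo.1 hx).1

theorem shapley_of_mem (hp : p ∈ P) (v : Finset α → ℝ) :
    shapley P v p = (∑ π : {x // x ∈ P} ≃ Fin #P,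
      (v (coalitionUpTo π ⟨p, hp⟩) - v ((coalitionUpTo π ⟨p, hp⟩).erase p))) / (#P).factorial :=
  dif_pos hp

theorem shapley_of_notMem (hp : p ∉ P) (v : Finset α → ℝ) : shapley P v p = 0 :=
  dif_neg hp

theorem shapley_congr {v w : Finset α → ℝ} (h : ∀ Q ⊆ P, v Q = w Q) :
    shapley P v p = shapley P w p := by
  by_cases hp : p ∈ P
  · simp only [shapley_of_mem hp]
    congr 1
    refine sum_congr rfl fun π _ => ?_
    have hsub := coalitionUpTo_subset π ⟨p, hp⟩
    rw [h _ hsub, h _ ((erase_subset _ _).trans hsub)]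
  · simp only [shapley_of_notMem hp]

theorem shapley_add (v w : Finset α → ℝ) :
    shapley P (fun Q => v Q + w Q) p = shapley P v p + shapley P w p := by
  by_cases hp : p ∈ P
  · simp only [shapley_of_mem hp, add_sub_add_comm, sum_add_distrib, add_div]
  · simp only [shapley_of_notMem hp, add_zero]

theorem shapley_sub (v w : Finset α → ℝ) :
    shapley P (fun Q => v Q - w Q) p = shapley P v p - shapley P w p := by
  by_cases hp : p ∈ P
  · simp only [shapley_of_mem hp, sub_sub_sub_comm, sum_sub_distrib, sub_div]
  · simp only [shapley_of_notMem hp, sub_zero]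

theorem shapley_const_mul (c : ℝ) (v : Finset α → ℝ) :
    shapley P (fun Q => c * v Q) p = c * shapley P v p := by
  by_cases hp : p ∈ P
  · simp only [shapley_of_mem hp, ← mul_sub, ← mul_sum, mul_div_assoc]
  · simp only [shapley_of_notMem hp, mul_zero]

theorem shapley_sum {ι : Type*} (s : Finset ι) (v : ι → Finset α → ℝ) :
    shapley P (fun Q => ∑ k ∈ s, v k Q) p = ∑ k ∈ s, shapley P (v k) p := by
  by_cases hp : p ∈ P
  · simp only [shapley_of_mem hp, ← sum_sub_distrib, ← sum_div]
    rw [sum_comm]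
  · simp only [shapley_of_notMem hp, sum_const_zero]

end Shapley

section Counting

variable {β γ : Type*} [DecidableEq β] [LinearOrder γ]

theorem swap_trans_forall_le {t : Finset β} {p q : β} (hp : p ∈ t) (hq : q ∈ t) {π : β ≃ γ}
    (hπ : ∀ r ∈ t, π q ≤ π r) :
    ∀ r ∈ t, ((Equiv.swap p q).trans π) p ≤ ((Equiv.swap p q).trans π) r := by
  intro r hr
  rw [Equiv.trans_apply, Equiv.swap_apply_left, Equiv.trans_apply]
  apply hπ
  rw [Equiv.swap_apply_def]
  split_ifs <;> assumption

variable [Fintype β] [Fintype γ]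

theorem card_filter_forall_le_eq {t : Finset β} {p q : β} (hp : p ∈ t) (hq : q ∈ t) :
    #{π : β ≃ γ | ∀ r ∈ t, π q ≤ π r} = #{π : β ≃ γ | ∀ r ∈ t, π p ≤ π r} := by
  have swap_trans_involutive (π : β ≃ γ) :
      (Equiv.swap p q).trans ((Equiv.swap p q).trans π) = π := by
    ext r; simp
  refine card_nbij' (fun π => (Equiv.swap p q).trans π) (fun π => (Equiv.swap p q).trans π)
    (fun π hπ => ?_) (fun π hπ => ?_) (fun π _ => swap_trans_involutive π)
    (fun π _ => swap_trans_involutive π)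
  · simp only [mem_coe, mem_filter, mem_univ, true_and] at hπ ⊢
    exact swap_trans_forall_le hp hq hπ
  · simp only [mem_coe, mem_filter, mem_univ, true_and] at hπ ⊢
    rw [Equiv.swap_comm]
    exact swap_trans_forall_le hq hp hπ

theorem card_filter_forall_le_mul_card {t : Finset β} {p : β} (hp : p ∈ t) :
    #{π : β ≃ γ | ∀ r ∈ t, π p ≤ π r} * #t = Fintype.card (β ≃ γ) := by
  set F : β → Finset (β ≃ γ) := fun q => {π | ∀ r ∈ t, π q ≤ π r}
  have hdisj : (t : Set β).PairwiseDisjoint F := by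
    intro q hq q' hq' hne
    refine disjoint_left.2 fun π hπ hπ' => hne (π.injective ?_)
    simp only [F, mem_filter, mem_univ, true_and] at hπ hπ'
    exact le_antisymm (hπ q' hq') (hπ' q hq)
  have hcover : t.biUnion F = univ := by
    refine eq_univ_of_forall fun π => mem_biUnion.2 ?_
    obtain ⟨q, hq, hmin⟩ := exists_min_image t π ⟨p, hp⟩
    exact ⟨q, hq, by simpa [F] using hmin⟩
  calc #(F p) * #t = ∑ q ∈ t, #(F q) := by
        rw [sum_congr rfl fun q hq => card_filter_forall_le_eq hp hq, sum_const, smul_eq_mul,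
          mul_comm]
    _ = Fintype.card (β ≃ γ) := by rw [← card_biUnion hdisj, hcover, card_univ]

end Counting

section HittingGame

variable {α : Type*} [DecidableEq α] {P T : Finset α} {p : α}

def hittingGame (T Q : Finset α) : ℝ := if (Q ∩ T).Nonempty then 1 else 0

theorem shapley_hittingGame_of_notMem (hp : p ∉ T) : shapley P (hittingGame T) p = 0 := by
  by_cases hpP : p ∈ P
  · simp only [shapley_of_mem hpP, hittingGame, erase_inter,
      erase_eq_of_notMem fun h => hp (mem_inter.1 h).2, sub_self, sum_const_zero, zero_div]
  · exact shapley_of_notMem hpP _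

theorem hittingGame_marginal (hT : T ⊆ P) (hp : p ∈ T) (π : {x // x ∈ P} ≃ Fin #P) :
    hittingGame T (coalitionUpTo π ⟨p, hT hp⟩) -
        hittingGame T ((coalitionUpTo π ⟨p, hT hp⟩).erase p) =
      if ∀ q ∈ T.subtype (· ∈ P), π ⟨p, hT hp⟩ ≤ π q then 1 else 0 := by
  have hjoin : (coalitionUpTo π ⟨p, hT hp⟩ ∩ T).Nonempty :=
    ⟨p, mem_inter.2 ⟨mem_coalitionUpTo.2 ⟨hT hp, le_rfl⟩, hp⟩⟩
  have hbefore : ((coalitionUpTo π ⟨p, hT hp⟩).erase p ∩ T).Nonempty ↔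
      ¬∀ q ∈ T.subtype (· ∈ P), π ⟨p, hT hp⟩ ≤ π q := by
    simp only [Finset.Nonempty, mem_inter, mem_erase, mem_coalitionUpTo, mem_subtype, not_forall,
      not_le, Subtype.exists]
    constructor
    · rintro ⟨q, ⟨hqp, hqP, hle⟩, hqT⟩
      exact ⟨q, hqP, hqT, lt_of_le_of_ne hle fun h => hqp (congrArg Subtype.val (π.injective h))⟩
    · rintro ⟨q, hqP, hqT, hlt⟩
      exact ⟨q, ⟨fun h => by subst h; exact lt_irrefl _ hlt, hqP, hlt.le⟩, hqT⟩
  simp only [hittingGame, if_pos hjoin, hbefore]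
  split_ifs <;> norm_num

theorem shapley_hittingGame (hT : T ⊆ P) (hp : p ∈ T) :
    shapley P (hittingGame T) p = (#T : ℝ)⁻¹ := by
  have hcount := card_filter_forall_le_mul_card (γ := Fin #P)
    (mem_subtype.2 hp : (⟨p, hT hp⟩ : {x // x ∈ P}) ∈ T.subtype (· ∈ P))
  rw [card_subtype, filter_true_of_mem hT, Fintype.card_equiv P.equivFin, Fintype.card_coe]
    at hcount
  have hfirst : (#{π : {x // x ∈ P} ≃ Fin #P | ∀ q ∈ T.subtype (· ∈ P), π ⟨p, hT hp⟩ ≤ π q} : ℝ)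
      ≠ 0 := Nat.cast_ne_zero.2 (left_ne_zero_of_mul (hcount ▸ (Nat.factorial_pos _).ne'))
  rw [shapley_of_mem (hT hp), sum_congr rfl fun π _ => hittingGame_marginal hT hp π, sum_boole,
    ← hcount, Nat.cast_mul, div_mul_eq_div_div, div_self hfirst, one_div]

end HittingGame

section CrossingGame

variable {α : Type*} [DecidableEq α] {L R : Finset α} {p : α}

def crossingGame (L R Q : Finset α) : ℝ :=
  if (Q ∩ L).Nonempty ∧ (Q ∩ R).Nonempty then 1 else 0

theorem crossingGame_comm (L R : Finset α) : crossingGame L R = crossingGame R L := by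
  funext Q
  simp only [crossingGame, and_comm]

theorem crossingGame_eq_hittingGame (L R : Finset α) :
    crossingGame L R =
      fun Q => hittingGame L Q + hittingGame R Q - hittingGame (L ∪ R) Q := by
  funext Q
  simp only [crossingGame, hittingGame, inter_union_distrib_left, union_nonempty]
  split_ifs <;> simp_all

theorem shapley_crossingGame_of_mem_right (hpL : p ∉ L) (hpR : p ∈ R) :
    shapley (L ∪ R) (crossingGame L R) p = (#R : ℝ)⁻¹ - (#(L ∪ R) : ℝ)⁻¹ := by
  rw [crossingGame_eq_hittingGame, shapley_sub, shapley_add, shapley_hittingGame_of_notMem hpL,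
    shapley_hittingGame subset_union_right hpR,
    shapley_hittingGame subset_rfl (mem_union_right L hpR), zero_add]

end CrossingGame

section LengthInterval

variable {X : ℕ → ℝ} {n : ℕ} {Q : Finset ℝ}

theorem card_image_Icc (hX : StrictMonoOn X (Set.Icc 1 n)) {a b : ℕ} (ha : 1 ≤ a) (hb : b ≤ n) :
    #((Icc a b).image X) = b + 1 - a := by
  rw [card_image_of_injOn (hX.injOn.mono (by rw [coe_Icc]; exact Set.Icc_subset_Icc ha hb)),
    Nat.card_Icc]

theorem mem_image_Icc_iff (hX : StrictMonoOn X (Set.Icc 1 n)) {a b i : ℕ} (ha : 1 ≤ a)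
    (hb : b ≤ n) (hi : i ∈ Set.Icc 1 n) : X i ∈ (Icc a b).image X ↔ a ≤ i ∧ i ≤ b := by
  rw [← mem_coe, coe_image,
    hX.injOn.mem_image_iff (by rw [coe_Icc]; exact Set.Icc_subset_Icc ha hb) hi, mem_coe, mem_Icc]

theorem inter_image_Icc_nonempty_iff_min'_le (hX : StrictMonoOn X (Set.Icc 1 n))
    (hQ : Q ⊆ (Icc 1 n).image X) (hne : Q.Nonempty) {j : ℕ} (hj : j ∈ Set.Icc 1 n) :
    (Q ∩ (Icc 1 j).image X).Nonempty ↔ Q.min' hne ≤ X j := by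
  obtain ⟨a, ha, hXa⟩ := mem_image.1 (hQ (Q.min'_mem hne))
  rw [mem_Icc] at ha
  constructor
  · rintro ⟨_, hq⟩
    obtain ⟨hqQ, k, hk, rfl⟩ := mem_inter.1 hq |>.imp_right mem_image.1
    rw [mem_Icc] at hk
    exact (Q.min'_le _ hqQ).trans (hX.monotoneOn ⟨hk.1, hk.2.trans hj.2⟩ hj hk.2)
  · intro h
    rw [← hXa, hX.le_iff_le ha hj] at h
    exact ⟨_, mem_inter.2 ⟨Q.min'_mem hne, mem_image.2 ⟨a, mem_Icc.2 ⟨ha.1, h⟩, hXa⟩⟩⟩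

theorem inter_image_Icc_nonempty_iff_le_max' (hX : StrictMonoOn X (Set.Icc 1 n))
    (hQ : Q ⊆ (Icc 1 n).image X) (hne : Q.Nonempty) {j : ℕ} (hj : j ∈ Set.Icc 1 n) :
    (Q ∩ (Icc j n).image X).Nonempty ↔ X j ≤ Q.max' hne := by
  obtain ⟨b, hb, hXb⟩ := mem_image.1 (hQ (Q.max'_mem hne))
  rw [mem_Icc] at hb
  constructor
  · rintro ⟨_, hq⟩
    obtain ⟨hqQ, k, hk, rfl⟩ := mem_inter.1 hq |>.imp_right mem_image.1
    rw [mem_Icc] at hk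
    exact (hX.monotoneOn hj ⟨hj.1.trans hk.1, hk.2⟩ hk.1).trans (Q.le_max' _ hqQ)
  · intro h
    rw [← hXb, hX.le_iff_le hj hb] at h
    exact ⟨_, mem_inter.2 ⟨Q.max'_mem hne, mem_image.2 ⟨b, mem_Icc.2 ⟨h, hb.2⟩, hXb⟩⟩⟩

theorem max'_sub_min'_eq_sum_crossingGame (hX : StrictMonoOn X (Set.Icc 1 n))
    (hQ : Q ⊆ (Icc 1 n).image X) (hne : Q.Nonempty) :
    Q.max' hne - Q.min' hne = ∑ j ∈ Ico 1 n,
      (X (j + 1) - X j) * crossingGame ((Icc 1 j).image X) ((Icc (j + 1) n).image X) Q := by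
  obtain ⟨a, ha, hXa⟩ := mem_image.1 (hQ (Q.min'_mem hne))
  obtain ⟨b, hb, hXb⟩ := mem_image.1 (hQ (Q.max'_mem hne))
  rw [mem_Icc] at ha hb
  have hab : a ≤ b := by rw [← hX.le_iff_le ha hb, hXa, hXb]; exact Q.min'_le_max' hne
  have hcross : ∀ j ∈ Ico 1 n, crossingGame ((Icc 1 j).image X) ((Icc (j + 1) n).image X) Q =
      if j ∈ Ico a b then 1 else 0 := by
    intro j hj
    rw [mem_Ico] at hj
    refine if_congr ?_ rfl rfl
    rw [inter_image_Icc_nonempty_iff_min'_le hX hQ hne ⟨hj.1, hj.2.le⟩,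
      inter_image_Icc_nonempty_iff_le_max' hX hQ hne ⟨by omega, hj.2⟩, ← hXa, ← hXb,
      hX.le_iff_le ha ⟨hj.1, hj.2.le⟩, hX.le_iff_le ⟨by omega, hj.2⟩ hb, mem_Ico,
      Nat.add_one_le_iff]
  have hsub : Ico a b ⊆ Ico 1 n := Ico_subset_Ico ha.1 (by simpa using hb.2)
  rw [sum_congr rfl fun j hj => by rw [hcross j hj, mul_boole], ← sum_filter,
    filter_mem_eq_inter, inter_eq_right.2 hsub, sum_Ico_sub X hab, hXa, hXb]

theorem lengthGame_eq_sum_crossingGame (hX : StrictMonoOn X (Set.Icc 1 n))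
    (hQ : Q ⊆ (Icc 1 n).image X) :
    (if h : Q.Nonempty then Q.max' h - Q.min' h else 0) = ∑ j ∈ Ico 1 n,
      (X (j + 1) - X j) * crossingGame ((Icc 1 j).image X) ((Icc (j + 1) n).image X) Q := by
  rcases Q.eq_empty_or_nonempty with rfl | hne
  · simp [crossingGame]
  · rw [dif_pos hne, max'_sub_min'_eq_sum_crossingGame hX hQ hne]

theorem shapley_crossingGame_Icc (hX : StrictMonoOn X (Set.Icc 1 n)) {i j : ℕ}
    (hi : i ∈ Set.Icc 1 n) (hj : j ∈ Ico 1 n) :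
    shapley ((Icc 1 n).image X)
        (crossingGame ((Icc 1 j).image X) ((Icc (j + 1) n).image X)) (X i) =
      (if j < i then ((n : ℝ) - j)⁻¹ else (j : ℝ)⁻¹) - (n : ℝ)⁻¹ := by
  rw [mem_Ico] at hj
  obtain ⟨hi1, hin⟩ := Set.mem_Icc.1 hi
  have hunion : (Icc 1 j).image X ∪ (Icc (j + 1) n).image X = (Icc 1 n).image X := by
    rw [← image_union]
    congr 1
    ext k
    simp only [mem_union, mem_Icc]
    omega
  have hcard_all : (#((Icc 1 n).image X) : ℝ) = n := by simp [card_image_Icc hX le_rfl le_rfl]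
  rw [← hunion]
  split_ifs with hji
  · rw [shapley_crossingGame_of_mem_right (by rw [mem_image_Icc_iff hX le_rfl hj.2.le hi]; omega)
      (by rw [mem_image_Icc_iff hX (by omega) le_rfl hi]; omega), hunion, hcard_all,
      card_image_Icc hX (by omega) le_rfl, Nat.add_sub_add_right, Nat.cast_sub hj.2.le]
  · rw [crossingGame_comm, union_comm, shapley_crossingGame_of_mem_right
      (by rw [mem_image_Icc_iff hX (by omega) le_rfl hi]; omega)
      (by rw [mem_image_Icc_iff hX le_rfl hj.2.le hi]; omega), union_comm, hunion, hcard_all,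
      card_image_Icc hX le_rfl hj.2.le, Nat.add_sub_cancel]

end LengthInterval

theorem sum_Ico_mul_cut_weights (X : ℕ → ℝ) {n i : ℕ} (hi1 : 1 ≤ i) (hin : i ≤ n) :
    ∑ j ∈ Ico 1 n,
        (X (j + 1) - X j) * ((if j < i then ((n : ℝ) - j)⁻¹ else (j : ℝ)⁻¹) - (n : ℝ)⁻¹) =
      (∑ j ∈ Icc 2 i, (X j - X (j - 1)) / ((n : ℝ) - (j : ℝ) + 1)) +
        (∑ j ∈ Icc i (n - 1), (X (j + 1) - X j) / (j : ℝ)) - (X n - X 1) / (n : ℝ) := by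
  have hleft :
      ∑ j ∈ Ico 1 i, (X (j + 1) - X j) * (if j < i then ((n : ℝ) - j)⁻¹ else (j : ℝ)⁻¹) =
      ∑ j ∈ Icc 2 i, (X j - X (j - 1)) / ((n : ℝ) - (j : ℝ) + 1) := by
    rw [← Ico_add_one_right_eq_Icc, ← sum_Ico_add' _ 1 i 1]
    refine sum_congr rfl fun j hj => ?_
    rw [if_pos (mem_Ico.1 hj).2, Nat.add_sub_cancel, Nat.cast_add_one, div_eq_mul_inv]
    ring
  have hright :
      ∑ j ∈ Ico i n, (X (j + 1) - X j) * (if j < i then ((n : ℝ) - j)⁻¹ else (j : ℝ)⁻¹) =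
      ∑ j ∈ Icc i (n - 1), (X (j + 1) - X j) / (j : ℝ) := by
    rw [← Ico_add_one_right_eq_Icc, Nat.sub_add_cancel (hi1.trans hin)]
    exact sum_congr rfl fun j hj => by rw [if_neg (mem_Ico.1 hj).1.not_gt, div_eq_mul_inv]
  rw [← hleft, ← hright, sum_Ico_consecutive _ hi1 hin, ← sum_Ico_sub X (hi1.trans hin), sum_div,
    ← sum_sub_distrib]
  exact sum_congr rfl fun j _ => by ring

/-- The LengthInterval game: players are reals `X 1 < ⋯ < X n`, the worth of a
nonempty coalition is its maximum minus its minimum, and the Shapley value of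
`X i` is `∑_{j=2}^{i}(X j − X (j−1))/(n−j+1) + ∑_{j=i}^{n−1}(X (j+1) − X j)/j − (X n − X 1)/n`. -/
theorem shapley_length_interval (n : ℕ) (X : ℕ → ℝ)
    (hmono : ∀ i j : ℕ, 1 ≤ i → i < j → j ≤ n → X i < X j)
    (i : ℕ) (hi : i ∈ Finset.Icc 1 n) :
    shapley ((Finset.Icc 1 n).image X)
      (fun Q => if h : Q.Nonempty then Q.max' h - Q.min' h else 0) (X i) =
      (∑ j ∈ Finset.Icc 2 i, (X j - X (j - 1)) / ((n : ℝ) - (j : ℝ) + 1)) +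
        (∑ j ∈ Finset.Icc i (n - 1), (X (j + 1) - X j) / (j : ℝ)) -
        (X n - X 1) / (n : ℝ) := by
  obtain ⟨hi1, hin⟩ := mem_Icc.1 hi
  have hX : StrictMonoOn X (Set.Icc 1 n) := fun a ha b hb hab => hmono a b ha.1 hab hb.2
  rw [shapley_congr fun Q hQ => lengthGame_eq_sum_crossingGame hX hQ, shapley_sum,
    ← sum_Ico_mul_cut_weights X hi1 hin]
  refine sum_congr rfl fun j hj => ?_
  rw [shapley_const_mul, shapley_crossingGame_Icc hX ⟨hi1, hin⟩ hj]
end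

section
/- Let N be a finite set with n elements, and let A, B, C be pairwise disjoint subsets of N with |A| = α, |B| = β, |C| = γ. Fix an element a ∈ A. The number of permutations π : N → {1,…,n} such that (i) a is the first element of A in the order defined by π, and (ii) a appears before all elements of B or a appears before all elements of C, is exactly n! · (1/(α+β) + 1/(α+γ) − 1/(α+β+γ)). -/
open Finset

lemma key_count {α : Type*} [Fintype α] [DecidableEq α] (n : ℕ) (hn : Fintype.card α = n)
    (S : Finset α) (a : α) (ha : a ∈ S) :
    (Finset.univ.filter (fun π : α ≃ Fin n => ∀ x ∈ S, x ≠ a → π a < π x)).card * S.card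
      = n.factorial := by
  classical
  set P : α → (α ≃ Fin n) → Prop := fun s π => ∀ x ∈ S, x ≠ s → π s < π x with hP
  have aux : ∀ s ∈ S, ∀ t ∈ S, ∀ π : α ≃ Fin n, P s π → P t ((Equiv.swap t s).trans π) := by
    intro s hs t ht π hπ x hx hxt
    simp only [Equiv.trans_apply, Equiv.swap_apply_left]
    rcases eq_or_ne x s with rfl | hxs
    · rw [Equiv.swap_apply_right]
      exact hπ t ht (Ne.symm hxt)
    · rw [Equiv.swap_apply_of_ne_of_ne hxt hxs]
      exact hπ x hx hxs
  have hconst : ∀ s ∈ S,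
      (Finset.univ.filter (P s)).card = (Finset.univ.filter (P a)).card := by
    intro s hs
    apply Finset.card_bij' (fun π _ => (Equiv.swap a s).trans π)
      (fun π _ => (Equiv.swap s a).trans π)
    · intro π hπ
      simp only [Finset.mem_filter, Finset.mem_univ, true_and] at hπ ⊢
      exact aux s hs a ha π hπ
    · intro π hπ
      simp only [Finset.mem_filter, Finset.mem_univ, true_and] at hπ ⊢
      exact aux a ha s hs π hπ
    · intro π _
      ext x
      simp [Equiv.swap_comm a s]
    · intro π _
      ext x
      simp [Equiv.swap_comm a s]
  have hcover : (Finset.univ : Finset (α ≃ Fin n)) =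
      S.biUnion (fun s => Finset.univ.filter (P s)) := by
    ext π
    simp only [Finset.mem_univ, true_iff, Finset.mem_biUnion, Finset.mem_filter]
    obtain ⟨b, hb, hbmin⟩ := S.exists_min_image π ⟨a, ha⟩
    refine ⟨b, hb, trivial, fun x hx hxb => lt_of_le_of_ne (hbmin x hx) ?_⟩
    exact fun h => hxb (π.injective h).symm
  have hdisj : ∀ s ∈ S, ∀ t ∈ S, s ≠ t →
      Disjoint (Finset.univ.filter (P s)) (Finset.univ.filter (P t)) := by
    intro s hs t ht hst
    rw [Finset.disjoint_left]
    intro π hπs hπt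
    simp only [Finset.mem_filter, Finset.mem_univ, true_and] at hπs hπt
    exact absurd (hπt s hs hst) (not_lt_of_gt (hπs t ht (Ne.symm hst)))
  have hcard : Fintype.card (α ≃ Fin n) = n.factorial := by
    rw [Fintype.card_equiv (Fintype.equivFinOfCardEq hn), hn]
  calc (Finset.univ.filter (P a)).card * S.card
      = ∑ s ∈ S, (Finset.univ.filter (P s)).card := by
        rw [Finset.sum_congr rfl hconst, Finset.sum_const, smul_eq_mul, mul_comm]
    _ = (Finset.univ : Finset (α ≃ Fin n)).card := by
        rw [← Finset.card_biUnion hdisj, ← hcover]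
    _ = n.factorial := by rw [Finset.card_univ, hcard]

set_option maxHeartbeats 1000000 in
/-- Let `A`, `B`, `C` be pairwise disjoint subsets of an `n`-element set, with
`|A| = α`, `|B| = β`, `|C| = γ`, and fix `a ∈ A`.  The number of permutations in
which (i) `a` is the first element of `A` and (ii) `a` is before all elements of
`B` or before all elements of `C` is exactly
`n! · (1/(α+β) + 1/(α+γ) − 1/(α+β+γ))`. -/
theorem count_permutations_first_of_A {α : Type*} [Fintype α] [DecidableEq α]
    (n : ℕ) (hn : Fintype.card α = n)
    (A B C : Finset α) (hAB : Disjoint A B) (hAC : Disjoint A C) (hBC : Disjoint B C)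
    (a : α) (ha : a ∈ A) :
    (Set.ncard {π : α ≃ Fin n |
        (∀ a' ∈ A, a' ≠ a → π a < π a') ∧
        ((∀ b ∈ B, π a < π b) ∨ (∀ c ∈ C, π a < π c))} : ℝ) =
      (n.factorial : ℝ) *
        (1 / ((A.card : ℝ) + (B.card : ℝ)) + 1 / ((A.card : ℝ) + (C.card : ℝ)) -
          1 / ((A.card : ℝ) + (B.card : ℝ) + (C.card : ℝ))) := by
  classical
  have haB : a ∉ B := Finset.disjoint_left.mp hAB ha
  have haC : a ∉ C := Finset.disjoint_left.mp hAC ha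
  set f1 : (α ≃ Fin n) → Prop := fun π => ∀ x ∈ A ∪ B, x ≠ a → π a < π x with hf1
  set f2 : (α ≃ Fin n) → Prop := fun π => ∀ x ∈ A ∪ C, x ≠ a → π a < π x with hf2
  set f3 : (α ≃ Fin n) → Prop := fun π => ∀ x ∈ A ∪ B ∪ C, x ≠ a → π a < π x with hf3
  -- set identities
  have hset : {π : α ≃ Fin n |
        (∀ a' ∈ A, a' ≠ a → π a < π a') ∧
        ((∀ b ∈ B, π a < π b) ∨ (∀ c ∈ C, π a < π c))}
      = {π | f1 π} ∪ {π | f2 π} := by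
    ext π
    simp only [Set.mem_setOf_eq, Set.mem_union, hf1, hf2]
    constructor
    · rintro ⟨hA, hB | hC⟩
      · left
        intro x hx hxa
        rcases Finset.mem_union.mp hx with h | h
        · exact hA x h hxa
        · exact hB x h
      · right
        intro x hx hxa
        rcases Finset.mem_union.mp hx with h | h
        · exact hA x h hxa
        · exact hC x h
    · rintro (h | h)
      · exact ⟨fun x hx hxa => h x (Finset.mem_union_left _ hx) hxa,
          Or.inl fun b hb => h b (Finset.mem_union_right _ hb) (fun hba => haB (hba ▸ hb))⟩
      · exact ⟨fun x hx hxa => h x (Finset.mem_union_left _ hx) hxa,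
          Or.inr fun c hc => h c (Finset.mem_union_right _ hc) (fun hca => haC (hca ▸ hc))⟩
  have hinter : {π : α ≃ Fin n | f1 π} ∩ {π | f2 π} = {π | f3 π} := by
    ext π
    simp only [Set.mem_setOf_eq, Set.mem_inter_iff, hf1, hf2, hf3]
    constructor
    · rintro ⟨h1, h2⟩ x hx hxa
      rcases Finset.mem_union.mp hx with h | h
      · exact h1 x h hxa
      · exact h2 x (Finset.mem_union_right _ h) hxa
    · intro h
      exact ⟨fun x hx hxa => h x (Finset.mem_union_left _ hx) hxa,
        fun x hx hxa => h x (by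
          rcases Finset.mem_union.mp hx with h' | h'
          · exact Finset.mem_union_left _ (Finset.mem_union_left _ h')
          · exact Finset.mem_union_right _ h') hxa⟩
  -- counts
  have hcount : ∀ (f : (α ≃ Fin n) → Prop) [DecidablePred f],
      {π : α ≃ Fin n | f π}.ncard = (Finset.univ.filter f).card := by
    intro f _
    rw [Set.ncard_eq_toFinset_card', Set.toFinset_setOf]
  have key1 := key_count n hn (A ∪ B) a (Finset.mem_union_left _ ha)
  have key2 := key_count n hn (A ∪ C) a (Finset.mem_union_left _ ha)
  have key3 := key_count n hn (A ∪ B ∪ C) a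
    (Finset.mem_union_left _ (Finset.mem_union_left _ ha))
  have hcAB : (A ∪ B).card = A.card + B.card := Finset.card_union_of_disjoint hAB
  have hcAC : (A ∪ C).card = A.card + C.card := Finset.card_union_of_disjoint hAC
  have hcABC : (A ∪ B ∪ C).card = A.card + B.card + C.card := by
    rw [Finset.card_union_of_disjoint (Finset.disjoint_union_left.mpr ⟨hAC, hBC⟩), hcAB]
  have hIE : ({π : α ≃ Fin n | f1 π} ∪ {π | f2 π}).ncard + {π : α ≃ Fin n | f3 π}.ncard
      = {π : α ≃ Fin n | f1 π}.ncard + {π : α ≃ Fin n | f2 π}.ncard := by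
    rw [← hinter]
    exact Set.ncard_union_add_ncard_inter _ _ (Set.toFinite _) (Set.toFinite _)
  rw [hset]
  have hA1 : 0 < A.card := Finset.card_pos.mpr ⟨a, ha⟩
  rw [hcount f1, hcount f2, hcount f3] at hIE
  have e1 : ((Finset.univ.filter f1).card : ℝ) * ((A.card : ℝ) + B.card) = n.factorial := by
    have := congrArg (Nat.cast : ℕ → ℝ) key1
    push_cast [hcAB] at this
    linarith
  have e2 : ((Finset.univ.filter f2).card : ℝ) * ((A.card : ℝ) + C.card) = n.factorial := by
    have := congrArg (Nat.cast : ℕ → ℝ) key2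
    push_cast [hcAC] at this
    linarith
  have e3 : ((Finset.univ.filter f3).card : ℝ) * ((A.card : ℝ) + B.card + C.card) = n.factorial := by
    have := congrArg (Nat.cast : ℕ → ℝ) key3
    push_cast [hcABC] at this
    linarith
  have hur : ((({π : α ≃ Fin n | f1 π} ∪ {π | f2 π}).ncard : ℕ) : ℝ)
      = ((Finset.univ.filter f1).card : ℝ) + (Finset.univ.filter f2).card
        - (Finset.univ.filter f3).card := by
    have := congrArg (Nat.cast : ℕ → ℝ) hIE
    push_cast at this
    linarith
  rw [hur]
  have hs1 : (A.card : ℝ) + B.card ≠ 0 := by positivity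
  have hs2 : (A.card : ℝ) + C.card ≠ 0 := by positivity
  have hs3 : (A.card : ℝ) + B.card + C.card ≠ 0 := by positivity
  field_simp
  linear_combination (((A.card : ℝ) + C.card) * ((A.card : ℝ) + B.card + C.card)) * e1
    + (((A.card : ℝ) + B.card) * ((A.card : ℝ) + B.card + C.card)) * e2
    - (((A.card : ℝ) + B.card) * ((A.card : ℝ) + C.card)) * e3
end

section
/- Let N be a finite set with n elements, and let A, B, C be pairwise disjoint subsets of N with |A| = α, |B| = β, |C| = γ. Fix an element b ∈ B. The number of permutations π : N → {1,…,n} such that (i) b is the first element of B in the order defined by π, (ii) b appears before all elements of A, and (iii) at least one element of C appears before b, is exactly n! · (1/(α+β) − 1/(α+β+γ)). -/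
open Finset

private def Pmin {α : Type*} [DecidableEq α] (n : ℕ) (S : Finset α) (x : α) (π : α ≃ Fin n) : Prop :=
  ∀ y ∈ S, y ≠ x → π x < π y

private instance {α : Type*} [DecidableEq α] (n : ℕ) (S : Finset α) (x : α) :
    DecidablePred (Pmin n S x) := fun π => by
  unfold Pmin; infer_instance

private lemma Pmin_swap {α : Type*} [DecidableEq α] (n : ℕ) (S : Finset α) {x b : α}
    (hb : b ∈ S) (hxb : x ≠ b) {π : α ≃ Fin n} (hπ : Pmin n S x π) :
    Pmin n S b ((Equiv.swap x b).trans π) := by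
  intro y hy hyb
  simp only [Equiv.trans_apply, Equiv.swap_apply_right]
  rcases eq_or_ne y x with rfl | hyx
  · rw [Equiv.swap_apply_left]
    exact hπ b hb hxb.symm
  · rw [Equiv.swap_apply_of_ne_of_ne hyx hyb]
    exact hπ y hy hyx

private lemma fiber_card_eq {α : Type*} [Fintype α] [DecidableEq α] (n : ℕ) (S : Finset α)
    {x b : α} (hx : x ∈ S) (hb : b ∈ S) :
    (univ.filter (Pmin n S x)).card = (univ.filter (Pmin n S b)).card := by
  rcases eq_or_ne x b with rfl | hxb
  · rfl
  apply Finset.card_bij' (fun π _ => (Equiv.swap x b).trans π)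
    (fun π _ => (Equiv.swap x b).trans π)
  · intro π hπ
    simp only [mem_filter, mem_univ, true_and] at hπ ⊢
    exact Pmin_swap n S hb hxb hπ
  · intro π hπ
    simp only [mem_filter, mem_univ, true_and] at hπ ⊢
    rw [Equiv.swap_comm]
    exact Pmin_swap n S hx hxb.symm hπ
  · intro π _
    rw [← Equiv.trans_assoc, Equiv.swap_swap, Equiv.refl_trans]
  · intro π _
    rw [← Equiv.trans_assoc, Equiv.swap_swap, Equiv.refl_trans]

private lemma count_min {α : Type*} [Fintype α] [DecidableEq α] (n : ℕ)
    (hn : Fintype.card α = n) (S : Finset α) {b : α} (hb : b ∈ S) :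
    S.card * (univ.filter (Pmin n S b)).card = n.factorial := by
  have hSne : S.Nonempty := ⟨b, hb⟩
  have hcard : (univ : Finset (α ≃ Fin n)).card = n.factorial := by
    rw [show (univ : Finset (α ≃ Fin n)).card = Fintype.card (α ≃ Fin n) from rfl,
      Fintype.card_equiv (Fintype.equivFinOfCardEq hn), hn]
  set f : (α ≃ Fin n) → α := fun π => π.symm ((S.image π).min' (hSne.image π)) with hf
  have hfS : ∀ π : α ≃ Fin n, f π ∈ S := by
    intro π
    have := (S.image π).min'_mem (hSne.image π)
    rw [mem_image] at this
    obtain ⟨a, ha, hπa⟩ := this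
    rw [hf]
    simp only [← hπa, Equiv.symm_apply_apply]
    exact ha
  have hfle : ∀ (π : α ≃ Fin n) (y : α), y ∈ S → π (f π) ≤ π y := by
    intro π y hy
    rw [hf]
    simp only [Equiv.apply_symm_apply]
    exact (S.image π).min'_le _ (mem_image_of_mem π hy)
  have hiff : ∀ (π : α ≃ Fin n) (x : α), x ∈ S → (f π = x ↔ Pmin n S x π) := by
    intro π x hx
    constructor
    · rintro rfl y hy hyf
      exact lt_of_le_of_ne (hfle π y hy) (fun h => hyf (π.injective h.symm))
    · intro hP
      by_contra hne
      exact absurd (hfle π x hx) (not_le.mpr (hP (f π) (hfS π) hne))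
  have key : (univ : Finset (α ≃ Fin n)).card =
      ∑ x ∈ S, (univ.filter (fun π => f π = x)).card :=
    Finset.card_eq_sum_card_fiberwise (fun π _ => hfS π)
  rw [← hcard, key]
  have : ∀ x ∈ S, (univ.filter (fun π => f π = x)).card
      = (univ.filter (Pmin n S b)).card := by
    intro x hx
    rw [Finset.filter_congr (fun π _ => by simpa using hiff π x hx)]
    exact fiber_card_eq n S hx hb
  rw [Finset.sum_congr rfl this, Finset.sum_const, smul_eq_mul]

/-- Let `A`, `B`, `C` be pairwise disjoint subsets of an `n`-element set, with
`|A| = α`, `|B| = β`, `|C| = γ`, and fix `b ∈ B`.  The number of permutations in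
which (i) `b` is the first element of `B`, (ii) `b` is before all elements of
`A`, and (iii) at least one element of `C` is before `b`, is exactly
`n! · (1/(α+β) − 1/(α+β+γ))`. -/
theorem count_permutations_first_of_B {α : Type*} [Fintype α] [DecidableEq α]
    (n : ℕ) (hn : Fintype.card α = n)
    (A B C : Finset α) (hAB : Disjoint A B) (hAC : Disjoint A C) (hBC : Disjoint B C)
    (b : α) (hb : b ∈ B) :
    (Set.ncard {π : α ≃ Fin n |
        (∀ b' ∈ B, b' ≠ b → π b < π b') ∧
        (∀ a ∈ A, π b < π a) ∧
        (∃ c ∈ C, π c < π b)} : ℝ) =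
      (n.factorial : ℝ) *
        (1 / ((A.card : ℝ) + (B.card : ℝ)) -
          1 / ((A.card : ℝ) + (B.card : ℝ) + (C.card : ℝ))) := by
  classical
  set S1 := A ∪ B with hS1
  set S2 := A ∪ B ∪ C with hS2
  have hbS1 : b ∈ S1 := mem_union_right _ hb
  have hbS2 : b ∈ S2 := mem_union_left _ hbS1
  have hbA : b ∉ A := fun h => (hAB.forall_ne_finset h hb) rfl
  have hbC : b ∉ C := fun h => (hBC.forall_ne_finset hb h) rfl
  -- the target set as a Finset difference
  have hsub : (univ.filter (Pmin n S2 b)) ⊆ (univ.filter (Pmin n S1 b)) := by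
    intro π hπ
    simp only [mem_filter, mem_univ, true_and] at hπ ⊢
    intro y hy hyb
    exact hπ y (mem_union_left _ hy) hyb
  have hset : {π : α ≃ Fin n |
        (∀ b' ∈ B, b' ≠ b → π b < π b') ∧
        (∀ a ∈ A, π b < π a) ∧
        (∃ c ∈ C, π c < π b)} =
      ↑((univ.filter (Pmin n S1 b)) \ (univ.filter (Pmin n S2 b))) := by
    ext π
    simp only [Set.mem_setOf_eq, coe_sdiff, Set.mem_diff, mem_coe, mem_filter, mem_univ,
      true_and]
    constructor
    · rintro ⟨h1, h2, c, hc, hcb⟩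
      refine ⟨?_, ?_⟩
      · intro y hy hyb
        rcases mem_union.mp hy with hyA | hyB
        · exact h2 y hyA
        · exact h1 y hyB hyb
      · intro hP
        have hcb' : c ≠ b := fun h => hbC (h ▸ hc)
        exact absurd (hP c (mem_union_right _ hc) hcb') (not_lt.mpr hcb.le)
    · rintro ⟨h1, h2⟩
      refine ⟨fun b' hb' hne => h1 b' (mem_union_right _ hb') hne,
        fun a ha => h1 a (mem_union_left _ ha)
          (fun h => hbA (h ▸ ha)), ?_⟩
      unfold Pmin at h2
      push_neg at h2
      obtain ⟨y, hy, hyb, hle⟩ := h2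
      rcases mem_union.mp hy with hyAB | hyC
      · exact absurd (h1 y hyAB hyb) (not_lt.mpr hle)
      · exact ⟨y, hyC, lt_of_le_of_ne hle (fun h => hyb (π.injective h))⟩
  rw [hset, Set.ncard_coe_finset, card_sdiff_of_subset hsub]
  -- cardinalities
  have hAuB : Disjoint (A ∪ B) C := Finset.disjoint_union_left.mpr ⟨hAC, hBC⟩
  have hk1 : S1.card = A.card + B.card := card_union_of_disjoint hAB
  have hk2 : S2.card = A.card + B.card + C.card := by
    rw [hS2, card_union_of_disjoint hAuB, hk1]
  have hc1 := count_min n hn S1 hbS1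
  have hc2 := count_min n hn S2 hbS2
  set c1 := (univ.filter (Pmin n S1 b)).card
  set c2 := (univ.filter (Pmin n S2 b)).card
  have hle : c2 ≤ c1 := card_le_card hsub
  have hβ : 0 < B.card := card_pos.mpr ⟨b, hb⟩
  have hx : (0:ℝ) < (A.card : ℝ) + (B.card : ℝ) := by
    have : (0:ℝ) < (B.card : ℝ) := by exact_mod_cast hβ
    positivity
  have hy : (0:ℝ) < (A.card : ℝ) + (B.card : ℝ) + (C.card : ℝ) := by
    have : (0:ℝ) < (B.card : ℝ) := by exact_mod_cast hβ
    positivity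
  have h1 : ((A.card : ℝ) + (B.card : ℝ)) * (c1 : ℝ) = (n.factorial : ℝ) := by
    rw [hk1] at hc1; exact_mod_cast hc1
  have h2 : ((A.card : ℝ) + (B.card : ℝ) + (C.card : ℝ)) * (c2 : ℝ) = (n.factorial : ℝ) := by
    rw [hk2] at hc2; exact_mod_cast hc2
  have e1 : (c1 : ℝ) = (n.factorial : ℝ) / ((A.card : ℝ) + (B.card : ℝ)) := by
    rw [eq_div_iff hx.ne']; linarith
  have e2 : (c2 : ℝ) = (n.factorial : ℝ) / ((A.card : ℝ) + (B.card : ℝ) + (C.card : ℝ)) := by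
    rw [eq_div_iff hy.ne']; linarith
  rw [Nat.cast_sub hle, e1, e2]
  field_simp
end

section
/- Increasing chain for anchored rectangles: let P = {p₁,…,pₙ} be points in the open positive quadrant of ℝ² with 0 < x(p₁) < … < x(pₙ) and 0 < y(p₁) < … < y(pₙ) (an increasing chain). For a point p, let R_p = [0,x(p)] × [0,y(p)], and let v_ar(Q) = area(∪_{q∈Q} R_q) for Q ⊆ P, with v_ar(∅)=0. Then for every i ∈ {1,…,n}, φ(pᵢ, v_ar) = Σ_{j=1}^{i} (x(pⱼ)·y(pⱼ) − x(p_{j−1})·y(p_{j−1}))/(n − j + 1), where x(p₀)·y(p₀) is taken to be 0. -/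
open MeasureTheory

open Finset

lemma aux_vol (a b : ℝ) (ha : 0 ≤ a) (hb : 0 ≤ b) :
    (volume (Set.Icc (0:ℝ×ℝ) (a, b))).toReal = a * b := by
  rw [Set.Icc_prod_eq, MeasureTheory.Measure.volume_eq_prod, Measure.prod_prod]
  simp only [Prod.fst_zero, Prod.snd_zero]
  rw [Real.volume_Icc, Real.volume_Icc, ENNReal.toReal_mul,
    ENNReal.toReal_ofReal (by linarith), ENNReal.toReal_ofReal (by linarith)]
  ring

lemma aux_telescope (f : ℕ → ℝ) : ∀ i M : ℕ, M ≤ i →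
    ∑ j ∈ Finset.Ioc M i, (f j - f (j-1)) = f i - f M := by
  intro i
  induction i with
  | zero => intro M h; interval_cases M; simp
  | succ k ih =>
    intro M h
    rcases Nat.eq_or_lt_of_le h with rfl | h'
    · simp
    · have hk : M ≤ k := Nat.lt_succ_iff.mp h'
      rw [Finset.sum_Ioc_succ_top hk, ih M hk, Nat.add_sub_cancel]
      ring


lemma aux_count {α : Type*} [DecidableEq α] [Fintype α] (m : ℕ)
    (T : Finset α) (a : α) (ha : a ∈ T) :
    ((Finset.univ.filter fun π : α ≃ Fin m => ∀ t ∈ T, π a ≤ π t).card) * T.card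
      = Fintype.card (α ≃ Fin m) := by
  classical
  have key : ∀ t ∈ T, (Finset.univ.filter fun π : α ≃ Fin m => ∀ s ∈ T, π t ≤ π s).card
      = (Finset.univ.filter fun π : α ≃ Fin m => ∀ s ∈ T, π a ≤ π s).card := by
    intro t ht
    have hswapT : ∀ s ∈ T, Equiv.swap a t s ∈ T := by
      intro s hs
      rcases eq_or_ne s a with rfl | hsa
      · rwa [Equiv.swap_apply_left]
      rcases eq_or_ne s t with rfl | hst
      · rwa [Equiv.swap_apply_right]
      · rwa [Equiv.swap_apply_of_ne_of_ne hsa hst]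
    apply Finset.card_nbij (fun π => (Equiv.swap a t).trans π)
    · intro π hπ
      simp only [Finset.mem_coe, Finset.mem_filter, Finset.mem_univ, true_and] at hπ ⊢
      intro s hs
      have := hπ _ (hswapT s hs)
      simpa [Equiv.swap_apply_left] using this
    · intro π _ π' _ h
      refine Equiv.ext fun x => ?_
      have h' := congrArg (fun g : α ≃ Fin m => g (Equiv.swap a t x)) h
      simpa [Equiv.swap_apply_self] using h'
    · intro π' hπ'
      simp only [Finset.mem_coe, Finset.mem_filter, Finset.mem_univ, true_and] at hπ'
      refine ⟨(Equiv.swap a t).trans π', ?_, ?_⟩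
      · simp only [Finset.mem_coe, Finset.mem_filter, Finset.mem_univ, true_and]
        intro s hs
        have := hπ' _ (hswapT s hs)
        simpa [Equiv.swap_apply_right] using this
      · refine Equiv.ext fun x => ?_
        simp [Equiv.swap_apply_self]
  have part : ∑ t ∈ T, (Finset.univ.filter fun π : α ≃ Fin m => ∀ s ∈ T, π t ≤ π s).card
      = Fintype.card (α ≃ Fin m) := by
    rw [← Finset.card_univ, Finset.card_eq_sum_ones Finset.univ]
    simp_rw [Finset.card_filter]
    rw [Finset.sum_comm]
    apply Finset.sum_congr rfl
    intro π _
    rw [← Finset.card_filter, Finset.card_eq_one]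
    obtain ⟨t₀, ht₀, hmin⟩ := Finset.exists_min_image T π ⟨a, ha⟩
    refine ⟨t₀, ?_⟩
    ext s
    simp only [Finset.mem_filter, Finset.mem_singleton]
    constructor
    · rintro ⟨hs, hmin'⟩
      exact π.injective (le_antisymm (hmin' _ ht₀) (hmin _ hs))
    · rintro rfl; exact ⟨ht₀, hmin⟩
  calc (Finset.univ.filter fun π : α ≃ Fin m => ∀ t ∈ T, π a ≤ π t).card * T.card
      = ∑ t ∈ T, (Finset.univ.filter fun π : α ≃ Fin m => ∀ s ∈ T, π t ≤ π s).card := by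
        rw [Finset.sum_congr rfl key, Finset.sum_const, smul_eq_mul, mul_comm]
    _ = _ := part

/-- Increasing chain for anchored rectangles: if `p 1, …, p n` is an increasing
chain in the open positive quadrant, then
`φ(p i, v_ar) = ∑_{j=1}^{i} (x(p j)·y(p j) − x(p (j−1))·y(p (j−1)))/(n − j + 1)`,
with `x(p 0)·y(p 0)` taken to be `0`. -/
theorem shapley_anchored_rectangles_increasing_chain (n : ℕ) (p : ℕ → ℝ × ℝ)
    (hpos : ∀ k ∈ Finset.Icc 1 n, 0 < (p k).1 ∧ 0 < (p k).2)
    (hchain : ∀ k l : ℕ, 1 ≤ k → k < l → l ≤ n →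
      (p k).1 < (p l).1 ∧ (p k).2 < (p l).2)
    (i : ℕ) (hi : i ∈ Finset.Icc 1 n) :
    shapley ((Finset.Icc 1 n).image p)
      (fun Q => (volume (⋃ q ∈ (Q : Set (ℝ × ℝ)), Set.Icc (0 : ℝ × ℝ) q)).toReal)
      (p i) =
      ∑ j ∈ Finset.Icc 1 i,
        ((p j).1 * (p j).2 - (if j = 1 then 0 else (p (j - 1)).1 * (p (j - 1)).2)) /
          ((n : ℝ) - (j : ℝ) + 1) := by
  classical
  obtain ⟨hi1, hin⟩ := Finset.mem_Icc.mp hi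
  set P := (Finset.Icc 1 n).image p with hP
  set v : Finset (ℝ×ℝ) → ℝ :=
    fun Q => (volume (⋃ q ∈ (Q : Set (ℝ × ℝ)), Set.Icc (0 : ℝ × ℝ) q)).toReal with hvdef
  -- injectivity
  have hinj : Set.InjOn p (Finset.Icc 1 n : Finset ℕ) := by
    intro k hk l hl hkl
    simp only [Finset.coe_Icc, Set.mem_Icc] at hk hl
    by_contra hne
    rcases Nat.lt_or_ge k l with h | h
    · exact absurd (congrArg Prod.fst hkl) (ne_of_lt (hchain k l hk.1 h hl.2).1)
    · have h' : l < k := lt_of_le_of_ne h (fun e => hne e.symm)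
      exact absurd (congrArg Prod.fst hkl) (ne_of_gt (hchain l k hl.1 h' hk.2).1)
  have hpmem : p i ∈ P := Finset.mem_image_of_mem _ hi
  have hcard : P.card = n := by
    rw [hP, Finset.card_image_of_injOn hinj, Nat.card_Icc]; omega
  set c : ℕ → ℝ := fun k => if k = 0 then 0 else (p k).1 * (p k).2 with hc
  -- value of a coalition
  have hvK : ∀ K : Finset ℕ, K ⊆ Finset.Icc 1 n → ∀ h : K.Nonempty,
      v (K.image p) = c (K.max' h) := by
    intro K hK h
    have hm : K.max' h ∈ K := K.max'_mem h
    have hmem : K.max' h ∈ Finset.Icc 1 n := hK hm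
    obtain ⟨hm1, hmn⟩ := Finset.mem_Icc.mp hmem
    have hunion : (⋃ q ∈ ((K.image p : Finset (ℝ×ℝ)) : Set (ℝ×ℝ)), Set.Icc (0:ℝ×ℝ) q)
        = Set.Icc (0:ℝ×ℝ) (p (K.max' h)) := by
      rw [Finset.coe_image, Set.biUnion_image]
      apply Set.Subset.antisymm
      · refine Set.iUnion₂_subset fun k hk => Set.Icc_subset_Icc le_rfl ?_
        have hk' := Finset.mem_Icc.mp (hK hk)
        rcases eq_or_lt_of_le (K.le_max' k hk) with heq | hlt
        · rw [heq]
        · have h2 := hchain k (K.max' h) hk'.1 hlt hmn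
          exact Prod.le_def.mpr ⟨h2.1.le, h2.2.le⟩
      · exact Set.subset_biUnion_of_mem (u := fun k => Set.Icc (0:ℝ×ℝ) (p k))
          (Finset.mem_coe.mpr hm)
    have hpos' := hpos _ hmem
    rw [hvdef]
    simp only
    rw [hunion, show p (K.max' h) = ((p (K.max' h)).1, (p (K.max' h)).2) from rfl,
      aux_vol _ _ hpos'.1.le hpos'.2.le]
    have hne0 : K.max' h ≠ 0 := Nat.one_le_iff_ne_zero.mp hm1
    simp [hc, hne0]
  have hv0 : v ∅ = 0 := by rw [hvdef]; simp
  -- the index equivalence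
  have hfbij : Function.Bijective
      (fun k : {k // k ∈ Finset.Icc 1 n} =>
        (⟨p k.1, Finset.mem_image_of_mem p k.2⟩ : {x // x ∈ P})) := by
    constructor
    · intro k l hkl
      exact Subtype.ext (hinj (Finset.mem_coe.mpr k.2) (Finset.mem_coe.mpr l.2)
        (congrArg Subtype.val hkl))
    · rintro ⟨x, hx⟩
      obtain ⟨k, hk, rfl⟩ := Finset.mem_image.mp hx
      exact ⟨⟨k, hk⟩, rfl⟩
  set e : {k // k ∈ Finset.Icc 1 n} ≃ {x // x ∈ P} := Equiv.ofBijective _ hfbij with he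
  set idx : {x // x ∈ P} → ℕ := fun q => (e.symm q).val with hidx
  set a : {x // x ∈ P} := ⟨p i, hpmem⟩ with ha
  have hea : e ⟨i, hi⟩ = a := rfl
  have hesa : e.symm a = ⟨i, hi⟩ := by rw [Equiv.symm_apply_eq]; exact hea.symm
  have hidxa : idx a = i := by rw [hidx]; simp [hesa]
  have hidx_inj : ∀ q r : {x // x ∈ P}, idx q = idx r → q = r := by
    intro q r hqr
    have : e.symm q = e.symm r := Subtype.ext hqr
    exact e.symm.injective this
  have hpidx : ∀ q : {x // x ∈ P}, p (idx q) = q.val := by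
    intro q
    have := congrArg Subtype.val (e.apply_symm_apply q)
    exact this
  have hidxmem : ∀ q : {x // x ∈ P}, idx q ∈ Finset.Icc 1 n := fun q => (e.symm q).2
  set T : ℕ → Finset {x // x ∈ P} := fun j => P.attach.filter fun q => j ≤ idx q with hT
  -- the per-permutation term
  have hterm : ∀ π : {x // x ∈ P} ≃ Fin P.card,
      v ((P.attach.filter fun q => π q ≤ π a).image Subtype.val) -
        v (((P.attach.filter fun q => π q ≤ π a).image Subtype.val).erase (p i))
      = ∑ j ∈ Finset.Icc 1 i, (c j - c (j-1)) *
          (if ∀ t ∈ T j, π a ≤ π t then (1:ℝ) else 0) := by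
    intro π
    set K' := (P.attach.filter fun q => π q ≤ π a).image idx with hK'
    have hK'sub : K' ⊆ Finset.Icc 1 n := by
      intro k hk
      obtain ⟨q, _, rfl⟩ := Finset.mem_image.mp hk
      exact hidxmem q
    have hS : (P.attach.filter fun q => π q ≤ π a).image Subtype.val = K'.image p := by
      rw [hK', Finset.image_image]
      apply Finset.image_congr
      intro q _
      exact (hpidx q).symm
    have hiK : i ∈ K' := by
      rw [hK']
      apply Finset.mem_image.mpr
      exact ⟨a, Finset.mem_filter.mpr ⟨Finset.mem_attach _ _, le_refl _⟩, hidxa⟩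
    have hK'ne : K'.Nonempty := ⟨i, hiK⟩
    set E := K'.erase i with hE
    have hEsub : E ⊆ Finset.Icc 1 n := fun k hk => hK'sub (Finset.erase_subset _ _ hk)
    set M : ℕ := if h : E.Nonempty then E.max' h else 0 with hM
    have hEM : ∀ k ∈ E, k ≤ M := by
      intro k hk
      rw [hM, dif_pos ⟨k, hk⟩]
      exact Finset.le_max' _ _ hk
    have herase : (K'.image p).erase (p i) = E.image p := by
      ext x
      constructor
      · intro hx
        obtain ⟨hxne, hx'⟩ := Finset.mem_erase.mp hx
        obtain ⟨k, hk, rfl⟩ := Finset.mem_image.mp hx'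
        exact Finset.mem_image.mpr
          ⟨k, Finset.mem_erase.mpr ⟨fun h => hxne (by rw [h]), hk⟩, rfl⟩
      · intro hx
        obtain ⟨k, hk, rfl⟩ := Finset.mem_image.mp hx
        obtain ⟨hki, hk'⟩ := Finset.mem_erase.mp hk
        exact Finset.mem_erase.mpr
          ⟨fun h => hki (hinj (Finset.mem_coe.mpr (hK'sub hk'))
            (Finset.mem_coe.mpr hi) h),
           Finset.mem_image.mpr ⟨k, hk', rfl⟩⟩
    have hvS : v (K'.image p) = c (max i M) := by
      rw [hvK K' hK'sub hK'ne]
      congr 1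
      apply le_antisymm
      · apply Finset.max'_le
        intro k hk
        rcases eq_or_ne k i with rfl | hki
        · exact le_max_left _ _
        · exact le_trans (hEM k (Finset.mem_erase.mpr ⟨hki, hk⟩)) (le_max_right _ _)
      · apply max_le
        · exact Finset.le_max' _ _ hiK
        · rw [hM]
          split
          · next h => exact Finset.le_max' _ _ (Finset.erase_subset _ _ (E.max'_mem h))
          · exact Nat.zero_le _
    have hvE : v (E.image p) = c M := by
      rcases Finset.eq_empty_or_nonempty E with hEe | hEne
      · rw [hEe]
        simp only [Finset.image_empty]
        rw [hv0, hM, dif_neg (by rw [hEe]; simp), hc]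
        simp
      · rw [hvK E hEsub hEne, hM, dif_pos hEne]
    rw [hS, herase, hvS, hvE]
    -- indicator equivalence
    have hMC : ∀ j, 1 ≤ j → j ≤ i → (M < j ↔ ∀ t ∈ T j, π a ≤ π t) := by
      intro j hj1 hji
      constructor
      · intro hMj t ht
        have hjt : j ≤ idx t := (Finset.mem_filter.mp ht).2
        rcases eq_or_ne t a with rfl | hta
        · exact le_refl _
        · by_contra hcon
          have hle : π t ≤ π a := (not_le.mp hcon).le
          have htK : idx t ∈ K' := Finset.mem_image_of_mem idx
            (Finset.mem_filter.mpr ⟨Finset.mem_attach _ _, hle⟩)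
          have htne : idx t ≠ i := fun h => hta (hidx_inj t a (h.trans hidxa.symm))
          have : idx t ≤ M := hEM _ (Finset.mem_erase.mpr ⟨htne, htK⟩)
          omega
      · intro hC
        rcases Finset.eq_empty_or_nonempty E with hEe | hEne
        · rw [hM, dif_neg (by rw [hEe]; simp)]; omega
        · rw [hM, dif_pos hEne]
          by_contra hcon
          push_neg at hcon
          have hmE : E.max' hEne ∈ E := E.max'_mem hEne
          obtain ⟨hMi, hMK⟩ := Finset.mem_erase.mp hmE
          obtain ⟨q, hq, hqM⟩ := Finset.mem_image.mp hMK
          have hqle : π q ≤ π a := (Finset.mem_filter.mp hq).2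
          have hqT : q ∈ T j := Finset.mem_filter.mpr
            ⟨Finset.mem_attach _ _, by omega⟩
          have : π a ≤ π q := hC q hqT
          have hqa : q = a := π.injective (le_antisymm hqle this)
          exact hMi (by rw [← hqM, hqa, hidxa])
    -- telescoping identity
    have hstep : ∑ j ∈ Finset.Icc 1 i, (c j - c (j-1)) *
          (if ∀ t ∈ T j, π a ≤ π t then (1:ℝ) else 0)
        = ∑ j ∈ Finset.Ioc M i, (c j - c (j-1)) := by
      have h1 : ∀ j ∈ Finset.Icc 1 i, (c j - c (j-1)) *
            (if ∀ t ∈ T j, π a ≤ π t then (1:ℝ) else 0)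
          = if M < j then (c j - c (j-1)) else 0 := by
        intro j hj
        obtain ⟨hj1, hji⟩ := Finset.mem_Icc.mp hj
        by_cases hcase : M < j
        · rw [if_pos ((hMC j hj1 hji).mp hcase), if_pos hcase, mul_one]
        · rw [if_neg (fun hC => hcase ((hMC j hj1 hji).mpr hC)), if_neg hcase, mul_zero]
      rw [Finset.sum_congr rfl h1, ← Finset.sum_filter]
      congr 1
      ext j
      simp only [Finset.mem_filter, Finset.mem_Icc, Finset.mem_Ioc]
      omega
    rw [hstep]
    rcases le_or_gt M i with hMi | hMi
    · rw [aux_telescope c i M hMi, max_eq_left hMi]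
    · rw [Finset.Ioc_eq_empty (by omega), Finset.sum_empty, max_eq_right hMi.le]
      ring
  -- counting
  have hNdef : ∀ j : ℕ,
      (∑ π : {x // x ∈ P} ≃ Fin P.card, (if ∀ t ∈ T j, π a ≤ π t then (1:ℝ) else 0))
      = ((Finset.univ.filter
          fun π : {x // x ∈ P} ≃ Fin P.card => ∀ t ∈ T j, π a ≤ π t).card : ℝ) := by
    intro j
    rw [Finset.sum_boole]
  have hTcard : ∀ j, 1 ≤ j → j ≤ i → (T j).card = n - j + 1 := by
    intro j hj1 hji
    have h2 : (T j).card = (Finset.Icc j n).card := by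
      apply Finset.card_nbij idx
      · intro q hq
        have h1 := Finset.mem_Icc.mp (hidxmem q)
        have h2 := (Finset.mem_filter.mp hq).2
        exact Finset.mem_coe.mpr (Finset.mem_Icc.mpr ⟨h2, h1.2⟩)
      · intro q _ r _ hqr
        exact hidx_inj q r hqr
      · intro k hk
        obtain ⟨hkj, hkn⟩ := Finset.mem_Icc.mp (Finset.mem_coe.mp hk)
        have hk1 : k ∈ Finset.Icc 1 n := Finset.mem_Icc.mpr ⟨by omega, hkn⟩
        have hidxk : idx (e ⟨k, hk1⟩) = k := by
          rw [hidx]; simp [Equiv.symm_apply_apply]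
        refine ⟨e ⟨k, hk1⟩, ?_, hidxk⟩
        exact Finset.mem_coe.mpr (Finset.mem_filter.mpr
          ⟨Finset.mem_attach _ _, by rw [hidxk]; exact hkj⟩)
    rw [h2, Nat.card_Icc]
    omega
  have hNcount : ∀ j, 1 ≤ j → j ≤ i →
      (Finset.univ.filter
        fun π : {x // x ∈ P} ≃ Fin P.card => ∀ t ∈ T j, π a ≤ π t).card * (n - j + 1)
      = (P.card).factorial := by
    intro j hj1 hji
    have haT : a ∈ T j := Finset.mem_filter.mpr
      ⟨Finset.mem_attach _ _, by rw [hidxa]; omega⟩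
    have hcnt := aux_count P.card (T j) a haT
    rw [hTcard j hj1 hji] at hcnt
    rw [hcnt]
    have ecard : Fintype.card {x // x ∈ P} = P.card := Fintype.card_coe P
    rw [Fintype.card_equiv ((Fintype.equivFin _).trans (finCongr ecard)), ecard]
  -- assemble
  rw [shapley, dif_pos hpmem]
  simp only [← ha]
  rw [Finset.sum_congr rfl (fun π _ => hterm π), Finset.sum_comm, Finset.sum_div]
  refine Finset.sum_congr rfl fun j hj => ?_
  obtain ⟨hj1, hji⟩ := Finset.mem_Icc.mp hj
  have hjn : j ≤ n := le_trans hji hin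
  rw [← Finset.mul_sum, hNdef j]
  have hfac := hNcount j hj1 hji
  set N := (Finset.univ.filter
    fun π : {x // x ∈ P} ≃ Fin P.card => ∀ t ∈ T j, π a ≤ π t).card with hNd
  have hN0 : N ≠ 0 := by
    intro h0
    rw [h0, zero_mul] at hfac
    exact (Nat.factorial_pos P.card).ne' hfac.symm
  have hcastf : ((P.card).factorial : ℝ) = (N : ℝ) * ((n - j + 1 : ℕ) : ℝ) := by
    rw [← hfac]; push_cast; ring
  rw [hcastf, mul_comm (c j - c (j-1)) (N:ℝ),
    mul_div_mul_left _ _ (by exact_mod_cast hN0 : (N:ℝ) ≠ 0)]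
  congr 1
  · rcases eq_or_ne j 1 with rfl | h1
    · simp [hc]
    · have hj0 : j ≠ 0 := by omega
      have hj10 : j - 1 ≠ 0 := by omega
      simp [hc, hj0, hj10, h1]
  · rw [Nat.cast_add, Nat.cast_sub hjn, Nat.cast_one]
end

section
/- Let P be a finite set with n elements and let A, B, C be pairwise disjoint subsets of P with |A| = α, |B| = β, |C| = γ. Consider the coalitional game v on P defined by v(Q) = 1 if Q ∩ A ≠ ∅, or both Q ∩ B ≠ ∅ and Q ∩ C ≠ ∅; and v(Q) = 0 otherwise. Then for every p ∈ A, φ(p,v) = 1/(α+β) + 1/(α+γ) − 1/(α+β+γ), and for every p ∈ P\(A ∪ B ∪ C), φ(p,v) = 0. -/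
/-!
A player `p ∈ A` turns a losing coalition into a winning one exactly when the players
preceding it miss `A ∪ B` or miss `A ∪ C`; by inclusion–exclusion its marginal contribution
is `[p first in A ∪ B] + [p first in A ∪ C] - [p first in A ∪ B ∪ C]`. Swapping `p` with
another element of `T` shows that all elements of `T` are first among `T` equally often, so
`p` is first among `T` in a fraction `1 / #T` of all orders. A player outside `A ∪ B ∪ C`
never changes the value of a coalition.
-/

open Finset

section FirstAmong

variable {ι β : Type*} [LinearOrder β]

lemma card_filter_forall_le_eq_one {f : ι → β} (hf : Function.Injective f) {T : Finset ι}
    (hT : T.Nonempty) : #{j ∈ T | ∀ k ∈ T, f j ≤ f k} = 1 := by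
  obtain ⟨m, hmT, hm⟩ := T.exists_min_image f hT
  rw [card_eq_one]
  refine ⟨m, eq_singleton_iff_unique_mem.2 ⟨mem_filter.2 ⟨hmT, hm⟩, fun j hj => ?_⟩⟩
  obtain ⟨hjT, hj⟩ := mem_filter.1 hj
  exact hf (le_antisymm (hj m hmT) (hm j hjT))

variable [DecidableEq ι]

lemma swap_trans_forall_le_s16 {T : Finset ι} {i j : ι} (hi : i ∈ T) (hj : j ∈ T) {π : ι ≃ β}
    (hπ : ∀ k ∈ T, π i ≤ π k) :
    ∀ k ∈ T, ((Equiv.swap i j).trans π) j ≤ ((Equiv.swap i j).trans π) k := by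
  intro k hk
  simp only [Equiv.trans_apply, Equiv.swap_apply_right]
  apply hπ
  rw [Equiv.swap_apply_def]
  split_ifs <;> assumption

variable [Fintype ι] [Fintype β]

lemma card_forall_le_eq_of_mem {T : Finset ι} {i j : ι} (hi : i ∈ T) (hj : j ∈ T) :
    #{π : ι ≃ β | ∀ k ∈ T, π i ≤ π k} = #{π : ι ≃ β | ∀ k ∈ T, π j ≤ π k} := by
  refine card_bij' (fun π _ => (Equiv.swap i j).trans π)
    (fun π _ => (Equiv.swap i j).trans π) (fun π hπ => ?_) (fun π hπ => ?_)
    (fun π _ => by ext; simp) (fun π _ => by ext; simp)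
  · rw [mem_filter] at hπ ⊢
    exact ⟨mem_univ _, swap_trans_forall_le_s16 hi hj hπ.2⟩
  · rw [mem_filter] at hπ ⊢
    rw [Equiv.swap_comm]
    exact ⟨mem_univ _, swap_trans_forall_le_s16 hj hi hπ.2⟩

/-- Each element of `T` comes first among `T` for the same number of bijections, and every
bijection puts exactly one element of `T` first. -/
lemma card_forall_le_mul_card {T : Finset ι} {i : ι} (hi : i ∈ T) :
    #{π : ι ≃ β | ∀ k ∈ T, π i ≤ π k} * #T = Fintype.card (ι ≃ β) := by
  calc #{π : ι ≃ β | ∀ k ∈ T, π i ≤ π k} * #T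
      = ∑ j ∈ T, #{π : ι ≃ β | ∀ k ∈ T, π j ≤ π k} := by
        rw [sum_congr rfl fun j hj => card_forall_le_eq_of_mem hj hi, sum_const, smul_eq_mul,
          mul_comm]
    _ = ∑ π : ι ≃ β, #{j ∈ T | ∀ k ∈ T, π j ≤ π k} :=
        sum_card_bipartiteAbove_eq_sum_card_bipartiteBelow
          fun j (π : ι ≃ β) => ∀ k ∈ T, π j ≤ π k
    _ = ∑ _π : ι ≃ β, 1 :=
        sum_congr rfl fun π _ => by convert card_filter_forall_le_eq_one π.injective ⟨i, hi⟩
    _ = Fintype.card (ι ≃ β) := by simp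

end FirstAmong

section Shapley

variable {α : Type*} [DecidableEq α]

/-- The coalition `P(π, p)` of the players that `π` does not rank after `p`, `p` included. -/
def predecessors (P : Finset α) (π : P ≃ Fin #P) (p : P) : Finset α :=
  (P.attach.filter fun q => π q ≤ π p).image Subtype.val

lemma shapley_eq_sum {P : Finset α} {p : α} (hp : p ∈ P) (v : Finset α → ℝ) :
    shapley P v p =
      (∑ π : P ≃ Fin #P,
        (v (predecessors P π ⟨p, hp⟩) - v ((predecessors P π ⟨p, hp⟩).erase p))) /
        (#P).factorial :=
  dif_pos hp

lemma shapley_eq_zero_of_erase_eq (P : Finset α) {v : Finset α → ℝ} {p : α}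
    (hv : ∀ Q, v (Q.erase p) = v Q) : shapley P v p = 0 := by
  by_cases hp : p ∈ P
  · simp [shapley_eq_sum hp, hv]
  · exact dif_neg hp

lemma mem_predecessors_self {P : Finset α} {p : α} (hp : p ∈ P) (π : P ≃ Fin #P) :
    p ∈ predecessors P π ⟨p, hp⟩ :=
  mem_image.2 ⟨⟨p, hp⟩, mem_filter.2 ⟨mem_attach _ _, le_rfl⟩, rfl⟩

lemma disjoint_erase_predecessors_iff {P : Finset α} {p : α} (hp : p ∈ P) (π : P ≃ Fin #P)
    (T : Finset α) :
    Disjoint ((predecessors P π ⟨p, hp⟩).erase p) T ↔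
      ∀ r ∈ T.subtype (· ∈ P), π ⟨p, hp⟩ ≤ π r := by
  simp only [predecessors, disjoint_left, mem_erase, mem_image, mem_filter, mem_attach,
    true_and, mem_subtype]
  constructor
  · intro h r hr
    by_contra hlt
    exact h ⟨fun hrp => hlt (le_of_eq (congrArg π (Subtype.ext hrp)).symm), r, (not_le.1 hlt).le,
      rfl⟩ hr
  · rintro h _ ⟨hqp, r, hrp, rfl⟩ hr
    exact hqp (congrArg Subtype.val (π.injective (le_antisymm hrp (h r hr))))

lemma sum_ite_disjoint_erase_predecessors {P T : Finset α} (hT : T ⊆ P) {p : α} (hp : p ∈ T) :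
    ∑ π : P ≃ Fin #P,
      (if Disjoint ((predecessors P π ⟨p, hT hp⟩).erase p) T then (1 : ℝ) else 0) =
      (#P).factorial / #T := by
  have hcard : #(T.subtype (· ∈ P)) = #T := by
    rw [card_subtype, filter_true_of_mem hT]
  have hcount := card_forall_le_mul_card (β := Fin #P)
    (mem_subtype.2 hp : (⟨p, hT hp⟩ : P) ∈ T.subtype (· ∈ P))
  rw [hcard, Fintype.card_equiv (Fintype.equivFinOfCardEq (Fintype.card_coe P)),
    Fintype.card_coe] at hcount
  have hT0 : (#T : ℝ) ≠ 0 := Nat.cast_ne_zero.2 (card_ne_zero_of_mem hp)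
  simp only [disjoint_erase_predecessors_iff]
  rw [sum_boole, eq_div_iff hT0]
  exact_mod_cast hcount

end Shapley

section AOrBCGame

variable {α : Type*} [DecidableEq α]

def aOrBCGame (A B C Q : Finset α) : ℝ :=
  if (Q ∩ A).Nonempty ∨ ((Q ∩ B).Nonempty ∧ (Q ∩ C).Nonempty) then 1 else 0

lemma aOrBCGame_erase_of_notMem {A B C : Finset α} {p : α} (hpA : p ∉ A) (hpB : p ∉ B)
    (hpC : p ∉ C) (Q : Finset α) : aOrBCGame A B C (Q.erase p) = aOrBCGame A B C Q := by
  simp only [aOrBCGame, erase_inter, erase_eq_of_notMem (fun h => hpA (mem_inter.1 h).2),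
    erase_eq_of_notMem (fun h => hpB (mem_inter.1 h).2),
    erase_eq_of_notMem (fun h => hpC (mem_inter.1 h).2)]

/-- Inclusion–exclusion: `p ∈ A` is pivotal for `S` iff `S \ {p}` misses `A ∪ B` or misses
`A ∪ C`. -/
lemma aOrBCGame_sub_erase {A B C S : Finset α} {p : α} (hpS : p ∈ S) (hpA : p ∈ A) :
    aOrBCGame A B C S - aOrBCGame A B C (S.erase p) =
      (if Disjoint (S.erase p) (A ∪ B) then 1 else 0) +
        (if Disjoint (S.erase p) (A ∪ C) then 1 else 0) -
        (if Disjoint (S.erase p) (A ∪ B ∪ C) then 1 else 0) := by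
  have hwin : aOrBCGame A B C S = 1 := if_pos (Or.inl ⟨p, mem_inter.2 ⟨hpS, hpA⟩⟩)
  rw [hwin, aOrBCGame]
  simp only [← not_disjoint_iff_nonempty_inter, disjoint_union_right]
  by_cases hA : Disjoint (S.erase p) A <;> by_cases hB : Disjoint (S.erase p) B <;>
    by_cases hC : Disjoint (S.erase p) C <;> simp [hA, hB, hC]

lemma shapley_aOrBCGame_of_mem {P A B C : Finset α} (hA : A ⊆ P) (hB : B ⊆ P) (hC : C ⊆ P)
    (hAB : Disjoint A B) (hAC : Disjoint A C) (hBC : Disjoint B C) {p : α} (hp : p ∈ A) :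
    shapley P (aOrBCGame A B C) p =
      1 / (#A + #B : ℝ) + 1 / (#A + #C : ℝ) - 1 / (#A + #B + #C : ℝ) := by
  have hpP := hA hp
  have hAB' : A ∪ B ⊆ P := union_subset hA hB
  have hAC' : A ∪ C ⊆ P := union_subset hA hC
  rw [shapley_eq_sum hpP]
  simp only [aOrBCGame_sub_erase (mem_predecessors_self hpP _) hp]
  rw [sum_sub_distrib, sum_add_distrib,
    sum_ite_disjoint_erase_predecessors hAB' (mem_union_left _ hp),
    sum_ite_disjoint_erase_predecessors hAC' (mem_union_left _ hp),
    sum_ite_disjoint_erase_predecessors (union_subset hAB' hC)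
      (mem_union_left _ (mem_union_left _ hp)),
    card_union_of_disjoint hAB, card_union_of_disjoint hAC,
    card_union_of_disjoint (disjoint_union_left.2 ⟨hAC, hBC⟩), card_union_of_disjoint hAB]
  push_cast
  field_simp

end AOrBCGame

/-- For the game in which a coalition is worth `1` exactly when it meets `A`, or
meets both `B` and `C` (with `A`, `B`, `C` pairwise disjoint subsets of `P`):
each player of `A` has Shapley value `1/(α+β) + 1/(α+γ) − 1/(α+β+γ)`, and each
player outside `A ∪ B ∪ C` has Shapley value `0`. -/
theorem shapley_A_or_BC_game_on_A {α : Type*} [DecidableEq α] (P A B C : Finset α)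
    (hA : A ⊆ P) (hB : B ⊆ P) (hC : C ⊆ P)
    (hAB : Disjoint A B) (hAC : Disjoint A C) (hBC : Disjoint B C) :
    (∀ p ∈ A,
        shapley P
          (fun Q => if (Q ∩ A).Nonempty ∨ ((Q ∩ B).Nonempty ∧ (Q ∩ C).Nonempty)
            then (1 : ℝ) else 0) p =
          1 / ((A.card : ℝ) + (B.card : ℝ)) + 1 / ((A.card : ℝ) + (C.card : ℝ)) -
            1 / ((A.card : ℝ) + (B.card : ℝ) + (C.card : ℝ))) ∧
    (∀ p ∈ P, p ∉ A → p ∉ B → p ∉ C →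
        shapley P
          (fun Q => if (Q ∩ A).Nonempty ∨ ((Q ∩ B).Nonempty ∧ (Q ∩ C).Nonempty)
            then (1 : ℝ) else 0) p = 0) :=
  ⟨fun _ hp => shapley_aOrBCGame_of_mem hA hB hC hAB hAC hBC hp,
    fun _ _ hpA hpB hpC => shapley_eq_zero_of_erase_eq P (aOrBCGame_erase_of_notMem hpA hpB hpC)⟩
end

section
/- Let P be a finite set with n elements and let A, B, C be pairwise disjoint subsets of P with |A| = α, |B| = β, |C| = γ. Consider the coalitional game v on P defined by v(Q) = 1 if Q ∩ A ≠ ∅, or both Q ∩ B ≠ ∅ and Q ∩ C ≠ ∅; and v(Q) = 0 otherwise. Then for every p ∈ B, φ(p,v) = 1/(α+β) − 1/(α+β+γ), and symmetrically for every p ∈ C, φ(p,v) = 1/(α+γ) − 1/(α+β+γ). -/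
open Finset

lemma count_min_s17 {X : Type*} [Fintype X] [DecidableEq X] {n : ℕ} (hn : Fintype.card X = n)
    (D : Finset X) (p : X) (hp : p ∈ D) :
    (Finset.univ.filter fun π : X ≃ Fin n => ∀ q ∈ D, π p ≤ π q).card * D.card
      = n.factorial := by
  classical
  have hD : D.Nonempty := ⟨p, hp⟩
  set F : X → Finset (X ≃ Fin n) := fun q => Finset.univ.filter fun π => ∀ r ∈ D, π q ≤ π r
    with hF
  have hswap : ∀ q ∈ D, ∀ r ∈ D, Equiv.swap p q r ∈ D := by
    intro q hq r hr
    rcases eq_or_ne r p with rfl | h1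
    · rwa [Equiv.swap_apply_left]
    rcases eq_or_ne r q with rfl | h2
    · rwa [Equiv.swap_apply_right]
    · rwa [Equiv.swap_apply_of_ne_of_ne h1 h2]
  have hcard : ∀ q ∈ D, (F q).card = (F p).card := by
    intro q hq
    apply Finset.card_bij' (fun π _ => (Equiv.swap p q).trans π)
      (fun π _ => (Equiv.swap p q).trans π)
    · intro π hπ
      simp only [hF, Finset.mem_filter, Finset.mem_univ, true_and] at hπ ⊢
      intro r hr
      simpa [Equiv.swap_apply_left] using hπ (Equiv.swap p q r) (hswap q hq r hr)
    · intro π hπ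
      simp only [hF, Finset.mem_filter, Finset.mem_univ, true_and] at hπ ⊢
      intro r hr
      simpa [Equiv.swap_apply_right] using hπ (Equiv.swap p q r) (hswap q hq r hr)
    · intro π _; ext x; simp
    · intro π _; ext x; simp
  have hcover : (Finset.univ : Finset (X ≃ Fin n)) = D.biUnion F := by
    ext π
    simp only [Finset.mem_univ, Finset.mem_biUnion, true_iff, hF, Finset.mem_filter, true_and]
    obtain ⟨q, hq, hq2⟩ := Finset.mem_image.mp ((D.image π).min'_mem (hD.image π))
    refine ⟨q, hq, fun r hr => ?_⟩
    rw [hq2]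
    exact Finset.min'_le _ _ (Finset.mem_image_of_mem π hr)
  have hdisj : ∀ q₁ ∈ D, ∀ q₂ ∈ D, q₁ ≠ q₂ → Disjoint (F q₁) (F q₂) := by
    intro q₁ h1 q₂ h2 hne
    rw [Finset.disjoint_left]
    intro π hπ1 hπ2
    simp only [hF, Finset.mem_filter, Finset.mem_univ, true_and] at hπ1 hπ2
    exact hne (π.injective (le_antisymm (hπ1 q₂ h2) (hπ2 q₁ h1)))
  have htotal : Fintype.card (X ≃ Fin n) = n.factorial := by
    rw [Fintype.card_equiv (Fintype.equivFinOfCardEq hn), hn]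
  calc (F p).card * D.card = ∑ q ∈ D, (F q).card := by
        rw [Finset.sum_congr rfl hcard, Finset.sum_const, smul_eq_mul, mul_comm]
    _ = (D.biUnion F).card := (Finset.card_biUnion hdisj).symm
    _ = n.factorial := by rw [← hcover, ← htotal, Finset.card_univ]

lemma card_filter_val {α : Type*} [DecidableEq α] {P S : Finset α} (h : S ⊆ P) :
    (Finset.univ.filter fun x : {x // x ∈ P} => x.1 ∈ S).card = S.card := by
  apply Finset.card_bij (fun x _ => x.1)
  · intro x hx; exact (Finset.mem_filter.mp hx).2
  · intro x _ y _ hxy; exact Subtype.ext hxy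
  · intro a ha; exact ⟨⟨a, h ha⟩, Finset.mem_filter.mpr ⟨Finset.mem_univ _, ha⟩, rfl⟩

set_option maxHeartbeats 2000000 in
lemma aux_shapley {α : Type*} [DecidableEq α] (P A B C : Finset α)
    (hA : A ⊆ P) (hB : B ⊆ P) (hC : C ⊆ P)
    (hAB : Disjoint A B) (hAC : Disjoint A C) (hBC : Disjoint B C)
    (p : α) (hpB : p ∈ B) :
    shapley P (fun Q => if (Q ∩ A).Nonempty ∨ ((Q ∩ B).Nonempty ∧ (Q ∩ C).Nonempty)
      then (1:ℝ) else 0) p =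
      1 / ((A.card : ℝ) + B.card) - 1 / ((A.card : ℝ) + B.card + C.card) := by
  classical
  have hp : p ∈ P := hB hpB
  have hpA : p ∉ A := Finset.disjoint_right.mp hAB hpB
  have hpC : p ∉ C := Finset.disjoint_left.mp hBC hpB
  set n := P.card with hn
  set X := {x // x ∈ P} with hX
  set pp : X := ⟨p, hp⟩ with hpp
  set D1 : Finset X := Finset.univ.filter (fun x => x.1 ∈ A ∪ B) with hD1
  set D2 : Finset X := Finset.univ.filter (fun x => x.1 ∈ A ∪ B ∪ C) with hD2
  have hppD1 : pp ∈ D1 := Finset.mem_filter.mpr ⟨Finset.mem_univ _, Finset.mem_union_right _ hpB⟩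
  have hppD2 : pp ∈ D2 := Finset.mem_filter.mpr ⟨Finset.mem_univ _,
    Finset.mem_union_left _ (Finset.mem_union_right _ hpB)⟩
  set Cond1 : (X ≃ Fin n) → Prop := fun π => ∀ q ∈ D1, π pp ≤ π q with hC1
  set CondA : (X ≃ Fin n) → Prop := fun π => ∀ q ∈ D2, π pp ≤ π q with hCA
  set Cond2 : (X ≃ Fin n) → Prop := fun π => ∃ q : X, q.1 ∈ C ∧ π q ≤ π pp with hC2
  simp only [shapley]
  rw [dif_pos hp]
  have key : ∀ π : X ≃ Fin n,
      ((fun Q => if (Q ∩ A).Nonempty ∨ ((Q ∩ B).Nonempty ∧ (Q ∩ C).Nonempty)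
        then (1:ℝ) else 0)
        ((P.attach.filter fun q => π q ≤ π ⟨p, hp⟩).image Subtype.val) -
       (fun Q => if (Q ∩ A).Nonempty ∨ ((Q ∩ B).Nonempty ∧ (Q ∩ C).Nonempty)
        then (1:ℝ) else 0)
        (((P.attach.filter fun q => π q ≤ π ⟨p, hp⟩).image Subtype.val).erase p)) =
      if Cond1 π ∧ Cond2 π then 1 else 0 := by
    intro π
    beta_reduce
    set Q : Finset α := (P.attach.filter fun q => π q ≤ π ⟨p, hp⟩).image Subtype.val with hQdef
    have hmem : ∀ x, x ∈ Q ↔ ∃ h : x ∈ P, π ⟨x, h⟩ ≤ π pp := by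
      intro x
      simp [hQdef, Finset.mem_image, Finset.mem_filter, hpp]
    have hpQ : p ∈ Q := (hmem p).mpr ⟨hp, le_refl _⟩
    have hQA : Q.erase p ∩ A = Q ∩ A := by
      ext x
      simp only [Finset.mem_inter, Finset.mem_erase]
      constructor
      · rintro ⟨⟨_, h⟩, h2⟩; exact ⟨h, h2⟩
      · rintro ⟨h1, h2⟩; exact ⟨⟨fun e => hpA (e ▸ h2), h1⟩, h2⟩
    have hQC : Q.erase p ∩ C = Q ∩ C := by
      ext x
      simp only [Finset.mem_inter, Finset.mem_erase]
      constructor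
      · rintro ⟨⟨_, h⟩, h2⟩; exact ⟨h, h2⟩
      · rintro ⟨h1, h2⟩; exact ⟨⟨fun e => hpC (e ▸ h2), h1⟩, h2⟩
    by_cases hc : Cond1 π ∧ Cond2 π
    · rw [if_pos hc]
      obtain ⟨h1, c, hcC, hcle⟩ := hc
      have hcQ : c.1 ∈ Q := (hmem c.1).mpr ⟨c.2, hcle⟩
      have hv1 : ((Q ∩ A).Nonempty ∨ ((Q ∩ B).Nonempty ∧ (Q ∩ C).Nonempty)) :=
        Or.inr ⟨⟨p, Finset.mem_inter.mpr ⟨hpQ, hpB⟩⟩, ⟨c.1, Finset.mem_inter.mpr ⟨hcQ, hcC⟩⟩⟩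
      have hv0 : ¬(((Q.erase p) ∩ A).Nonempty ∨
          (((Q.erase p) ∩ B).Nonempty ∧ ((Q.erase p) ∩ C).Nonempty)) := by
        rintro (⟨x, hx⟩ | ⟨⟨x, hx⟩, -⟩) <;>
        · obtain ⟨hx1, hx2⟩ := Finset.mem_inter.mp hx
          obtain ⟨hxp, hxQ⟩ := Finset.mem_erase.mp hx1
          obtain ⟨hxP, hxle⟩ := (hmem x).mp hxQ
          have hxD1 : (⟨x, hxP⟩ : X) ∈ D1 := Finset.mem_filter.mpr ⟨Finset.mem_univ _, by
            first
              | exact Finset.mem_union_left _ hx2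
              | exact Finset.mem_union_right _ hx2⟩
          have := le_antisymm hxle (h1 _ hxD1)
          exact hxp (congrArg Subtype.val (π.injective this))
      rw [if_pos hv1, if_neg hv0]
      norm_num
    · rw [if_neg hc]
      rw [sub_eq_zero]
      rcases not_and_or.mp hc with hnc1 | hnc2
      · simp only [hC1, not_forall] at hnc1
        obtain ⟨q, hqD1, hqnle⟩ := hnc1
        have hqlt : π q < π pp := lt_of_not_ge hqnle
        have hqQ : q.1 ∈ Q := (hmem q.1).mpr ⟨q.2, le_of_lt hqlt⟩
        have hqp : q.1 ≠ p := by
          intro e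
          have : q = pp := Subtype.ext e
          rw [this] at hqlt; exact lt_irrefl _ hqlt
        have hqE : q.1 ∈ Q.erase p := Finset.mem_erase.mpr ⟨hqp, hqQ⟩
        have hqAB : q.1 ∈ A ∪ B := (Finset.mem_filter.mp hqD1).2
        rcases Finset.mem_union.mp hqAB with hqA | hqB
        · rw [if_pos (Or.inl ⟨q.1, Finset.mem_inter.mpr ⟨hqQ, hqA⟩⟩),
            if_pos (Or.inl ⟨q.1, Finset.mem_inter.mpr ⟨hqE, hqA⟩⟩)]
        · refine if_congr ?_ rfl rfl
          rw [hQA, hQC]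
          have hBQ : (Q ∩ B).Nonempty := ⟨q.1, Finset.mem_inter.mpr ⟨hqQ, hqB⟩⟩
          have hBE : ((Q.erase p) ∩ B).Nonempty := ⟨q.1, Finset.mem_inter.mpr ⟨hqE, hqB⟩⟩
          exact or_congr Iff.rfl (and_congr (iff_of_true hBQ hBE) Iff.rfl)
      · simp only [hC2, not_exists, not_and] at hnc2
        have hQCe : Q ∩ C = ∅ := by
          apply Finset.eq_empty_of_forall_notMem
          intro x hx
          obtain ⟨hxQ, hxC⟩ := Finset.mem_inter.mp hx
          obtain ⟨hxP, hxle⟩ := (hmem x).mp hxQ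
          exact hnc2 ⟨x, hxP⟩ hxC hxle
        refine if_congr ?_ rfl rfl
        rw [hQA, hQC, hQCe]
        simp
  rw [Finset.sum_congr rfl (fun π _ => key π)]
  rw [Finset.sum_boole]
  have hsub : (Finset.univ.filter CondA) ⊆ (Finset.univ.filter Cond1) := by
    intro π hπ
    simp only [hCA, Finset.mem_filter] at hπ
    refine Finset.mem_filter.mpr ⟨Finset.mem_univ _, fun q hq => hπ.2 q ?_⟩
    simp only [hD1, Finset.mem_filter] at hq
    exact Finset.mem_filter.mpr ⟨Finset.mem_univ _, Finset.mem_union_left _ hq.2⟩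
  have hsplit : Finset.univ.filter (fun π => Cond1 π ∧ Cond2 π) =
      (Finset.univ.filter Cond1) \ (Finset.univ.filter CondA) := by
    ext π
    simp only [Finset.mem_filter, Finset.mem_sdiff, Finset.mem_univ, true_and]
    constructor
    · rintro ⟨h1, c, hcC, hcle⟩
      refine ⟨h1, fun hall => ?_⟩
      have hcD2 : c ∈ D2 := Finset.mem_filter.mpr ⟨Finset.mem_univ _,
        Finset.mem_union_right _ hcC⟩
      have := le_antisymm hcle (hall c hcD2)
      have hce : c = pp := π.injective this
      rw [hce] at hcC; exact hpC hcC
    · rintro ⟨h1, hna⟩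
      refine ⟨h1, ?_⟩
      simp only [hCA, not_forall] at hna
      obtain ⟨q, hqD2, hqnle⟩ := hna
      have hqU : q.1 ∈ A ∪ B ∪ C := (Finset.mem_filter.mp hqD2).2
      rcases Finset.mem_union.mp hqU with hqAB | hqC
      · exact absurd (h1 q (Finset.mem_filter.mpr ⟨Finset.mem_univ _, hqAB⟩)) hqnle
      · exact ⟨q, hqC, le_of_lt (lt_of_not_ge hqnle)⟩
  rw [hsplit, Finset.card_sdiff_of_subset hsub]
  have hcardX : Fintype.card X = n := Fintype.card_coe P
  have hcount1 := count_min_s17 hcardX D1 pp hppD1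
  have hcount2 := count_min_s17 hcardX D2 pp hppD2
  have hD1card : D1.card = A.card + B.card := by
    rw [hD1, card_filter_val (Finset.union_subset hA hB), Finset.card_union_of_disjoint hAB]
  have hABC : Disjoint (A ∪ B) C := Finset.disjoint_union_left.mpr ⟨hAC, hBC⟩
  have hD2card : D2.card = A.card + B.card + C.card := by
    rw [hD2, card_filter_val (Finset.union_subset (Finset.union_subset hA hB) hC),
      Finset.card_union_of_disjoint hABC, Finset.card_union_of_disjoint hAB]
  rw [hD1card] at hcount1
  rw [hD2card] at hcount2
  have hd1 : (0:ℝ) < (A.card : ℝ) + B.card := by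
    have : 0 < B.card := Finset.card_pos.mpr ⟨p, hpB⟩
    positivity
  have hd2 : (0:ℝ) < (A.card : ℝ) + B.card + C.card := by
    have : 0 < B.card := Finset.card_pos.mpr ⟨p, hpB⟩
    positivity
  have hfeq1 : Finset.univ.filter Cond1 =
      Finset.univ.filter (fun π : X ≃ Fin n => ∀ q ∈ D1, π pp ≤ π q) :=
    Finset.filter_congr (fun x _ => by simp only [hC1])
  have hfeq2 : Finset.univ.filter CondA =
      Finset.univ.filter (fun π : X ≃ Fin n => ∀ q ∈ D2, π pp ≤ π q) :=
    Finset.filter_congr (fun x _ => by simp only [hCA])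
  have hc1' : (Finset.univ.filter Cond1).card * (A.card + B.card) = n.factorial := by
    rw [hfeq1]; exact hcount1
  have hc2' : (Finset.univ.filter CondA).card * (A.card + B.card + C.card) = n.factorial := by
    rw [hfeq2]; exact hcount2
  have hf : (0:ℝ) < (n.factorial : ℝ) := by positivity
  have e1 : (((Finset.univ.filter Cond1).card : ℝ)) =
      (n.factorial : ℝ) / ((A.card : ℝ) + B.card) := by
    rw [eq_div_iff (ne_of_gt hd1)]
    exact_mod_cast hc1'
  have e2 : (((Finset.univ.filter CondA).card : ℝ)) =
      (n.factorial : ℝ) / ((A.card : ℝ) + B.card + C.card) := by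
    rw [eq_div_iff (ne_of_gt hd2)]
    exact_mod_cast hc2'
  rw [Nat.cast_sub (Finset.card_le_card hsub), e1, e2]
  have hgen : ∀ (a b c : ℝ), 0 < a → 0 < b → 0 < c → (a/b - a/c)/a = 1/b - 1/c := by
    intro a b c ha hb hc
    field_simp
  exact hgen _ _ _ hf hd1 hd2

/-- For the game in which a coalition is worth `1` exactly when it meets `A`, or
meets both `B` and `C` (with `A`, `B`, `C` pairwise disjoint subsets of `P`):
each player of `B` has Shapley value `1/(α+β) − 1/(α+β+γ)`, and symmetrically
each player of `C` has Shapley value `1/(α+γ) − 1/(α+β+γ)`. -/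
theorem shapley_A_or_BC_game_on_B_and_C {α : Type*} [DecidableEq α] (P A B C : Finset α)
    (hA : A ⊆ P) (hB : B ⊆ P) (hC : C ⊆ P)
    (hAB : Disjoint A B) (hAC : Disjoint A C) (hBC : Disjoint B C) :
    (∀ p ∈ B,
        shapley P
          (fun Q => if (Q ∩ A).Nonempty ∨ ((Q ∩ B).Nonempty ∧ (Q ∩ C).Nonempty)
            then (1 : ℝ) else 0) p =
          1 / ((A.card : ℝ) + (B.card : ℝ)) -
            1 / ((A.card : ℝ) + (B.card : ℝ) + (C.card : ℝ))) ∧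
    (∀ p ∈ C,
        shapley P
          (fun Q => if (Q ∩ A).Nonempty ∨ ((Q ∩ B).Nonempty ∧ (Q ∩ C).Nonempty)
            then (1 : ℝ) else 0) p =
          1 / ((A.card : ℝ) + (C.card : ℝ)) -
            1 / ((A.card : ℝ) + (B.card : ℝ) + (C.card : ℝ))) := by
  constructor
  · intro p hp
    exact aux_shapley P A B C hA hB hC hAB hAC hBC p hp
  · intro p hp
    have h := aux_shapley P A C B hA hC hB hAC hAB hBC.symm p hp
    have hv : (fun Q => if (Q ∩ A).Nonempty ∨ ((Q ∩ C).Nonempty ∧ (Q ∩ B).Nonempty)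
          then (1:ℝ) else 0)
        = (fun Q => if (Q ∩ A).Nonempty ∨ ((Q ∩ B).Nonempty ∧ (Q ∩ C).Nonempty)
          then (1:ℝ) else 0) := by
      funext Q
      exact if_congr (or_congr Iff.rfl and_comm) rfl rfl
    rw [hv] at h
    rw [h]
    ring
end
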